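/- arXiv:1711.03260 — 3 statements merged into one kernel-verified Lean document; each statement's English description precedes it below -/
import Mathlib

section
/- For each n ∈ ℕ ∪ {∞}, let f_n : (0,∞) → [0,∞) be a non-increasing function. Assume there exists a non-empty open interval I ⊂ (0,∞) such that for every q ∈ I, ∫_0^∞ e^{−qu} f_n(u) du → ∫_0^∞ e^{−qu} f_∞(u) du < ∞ as n → ∞. Then f_n(u) → f_∞(u) for every u ∈ (0,∞) at which f_∞ is continuous. -/
open MeasureTheory Filter Topology Set
open scoped ENNReal

noncomputable section

/-- Occupation time vector: `S_n(x) i = ∑_{k=1}^n 1_{A i}(T^k x)`. -/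
def occVec {X : Type*} (T : X → X) {ι : Type*} (A : ι → Set X) (n : ℕ) (x : X) :
    ι → ℝ :=
  fun i => ∑ k ∈ Finset.range n, (A i).indicator (fun _ => (1 : ℝ)) (T^[k + 1] x)

/-- `Y_k = {x : ψ(x) = k}` where `ψ(x) = min{k ≥ 0 : T^k x ∈ Y}`. -/
def Yray {X : Type*} (T : X → X) (Y : Set X) (k : ℕ) : Set X :=
  {x | T^[k] x ∈ Y ∧ ∀ j < k, T^[j] x ∉ Y}

/-- `B_{i,k}`: points of `Y` which stay in `Ai` at times `1, …, k-1` and return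
to `Y` at time `k`. -/
def Bray {X : Type*} (T : X → X) (Y Ai : Set X) (k : ℕ) : Set X :=
  {x | x ∈ Y ∧ (∀ j, 0 < j → j < k → T^[j] x ∈ Ai) ∧ T^[k] x ∈ Y}

/-- Wandering rate of `Y` starting from `B`: `∑_{k<n} μ(Y_k ∩ B)`
(for `B = A i` this is `w_i(n)`, for `B = univ` it is `w(n)`). -/
def wrate {X : Type*} [MeasurableSpace X] (μ : Measure X) (T : X → X) (Y B : Set X)
    (n : ℕ) : ℝ≥0∞ :=
  ∑ k ∈ Finset.range n, μ (Yray T Y k ∩ B)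

/-- `Q_i(s) = ∑_{n ≥ 0} e^{-ns} μ(Y_n ∩ A_i)`, a finite real number for `s > 0`. -/
def Qlap {X : Type*} [MeasurableSpace X] (μ : Measure X) (T : X → X) (Y B : Set X)
    (s : ℝ) : ℝ :=
  ∑' n : ℕ, Real.exp (-(n : ℝ) * s) * (μ (Yray T Y n ∩ B)).toReal

/-- `Y` dynamically separates the rays `A i`. -/
def DynSep {X : Type*} (T : X → X) (Y : Set X) {d : ℕ} (A : Fin d → Set X) : Prop :=
  ∀ x n i j, i ≠ j → x ∈ A i → T^[n] x ∈ A j → ∃ k, 0 < k ∧ k < n ∧ T^[k] x ∈ Y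

/-- Assumption (R). -/
structure RaySetting {X : Type*} [MeasurableSpace X] (μ : Measure X) (T : X → X)
    {d : ℕ} (Y : Set X) (A : Fin d → Set X) : Prop where
  d2 : 2 ≤ d
  sigmaFinite : SigmaFinite μ
  infiniteTotal : μ Set.univ = ⊤
  conservative : Conservative T μ
  ergodic : Ergodic T μ
  measY : MeasurableSet Y
  measA : ∀ i, MeasurableSet (A i)
  disjA : Pairwise (Function.onFun Disjoint A)
  disjYA : ∀ i, Disjoint Y (A i)
  cover : Y ∪ (⋃ i, A i) = Set.univ
  posY : 0 < μ Y
  finY : μ Y < ⊤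
  infA : ∀ i, μ (A i) = ⊤
  sep : DynSep T Y A

/-- `h` is a version of `T̂^k 1_B`, the `k`-th power of the dual operator applied
to the indicator of `B`. -/
def IsDualPowIndicator {X : Type*} [MeasurableSpace X] (μ : Measure X) (T : X → X)
    (B : Set X) (k : ℕ) (h : X → ℝ) : Prop :=
  Measurable h ∧ (∀ x, 0 ≤ h x) ∧ Integrable h μ ∧
    ∀ g : X → ℝ, Measurable g → (∃ C, ∀ x, |g x| ≤ C) →
      ∫ x, h x * g x ∂μ = ∫ x in B, g (T^[k] x) ∂μ

/-- Assumption (C): `hT k i` is a version of `T̂^k 1_{Y_k ∩ A_i}` and, for each `i`,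
the collection `{ w_i(n)⁻¹ ∑_{k<n} T̂^k 1_{Y_k ∩ A_i} : n ≥ 1 }` is strongly
precompact in `L¹(μ)`. -/
def AssumptionC {X : Type*} [MeasurableSpace X] (μ : Measure X) (T : X → X)
    {d : ℕ} (Y : Set X) (A : Fin d → Set X) (hT : ℕ → Fin d → X → ℝ) : Prop :=
  (∀ k i, IsDualPowIndicator μ T (Yray T Y k ∩ A i) k (hT k i)) ∧
    ∀ i, IsCompact (closure
      {f : Lp ℝ 1 μ | ∃ n, 1 ≤ n ∧
        (f : X → ℝ) =ᵐ[μ]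
          fun x => ((wrate μ T Y (A i) n).toReal)⁻¹ *
            ∑ k ∈ Finset.range n, hT k i x})

/-- A positive function is regularly varying of index `ρ` at `∞`. -/
def RegVarAtTop (f : ℝ → ℝ) (ρ : ℝ) : Prop :=
  (∀ᶠ x in atTop, 0 < f x) ∧
    ∀ r > 0, Tendsto (fun x => f (r * x) / f x) atTop (𝓝 (r ^ ρ))

/-- A positive sequence is regularly varying of index `ρ` at `∞`. -/
def RegVarSeq (a : ℕ → ℝ) (ρ : ℝ) : Prop :=
  RegVarAtTop (fun x => a ⌊x⌋₊) ρ

/-- A positive function is regularly varying of index `ρ` at `0+`. -/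
def RegVarAtZero (f : ℝ → ℝ) (ρ : ℝ) : Prop :=
  (∀ᶠ x in 𝓝[>] (0 : ℝ), 0 < f x) ∧
    ∀ r > 0, Tendsto (fun x => f (r * x) / f x) (𝓝[>] (0 : ℝ)) (𝓝 (r ^ ρ))

/-- Weak convergence of the pushforwards of `F n` under `ν` to the law of `ζ`. -/
def WeakConvTo {X : Type*} [MeasurableSpace X] (ν : Measure X) {E : Type*}
    [TopologicalSpace E] (F : ℕ → X → E) {Ω : Type*} [MeasurableSpace Ω]
    (P : Measure Ω) (ζ : Ω → E) : Prop :=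
  ∀ f : BoundedContinuousFunction E ℝ,
    Tendsto (fun n => ∫ x, f (F n x) ∂ν) atTop (𝓝 (∫ ω, f (ζ ω) ∂P))

/-- `ζ` has the generalized arcsine law `ζ_{α,β}`, characterized via the double
Laplace transform. -/
def HasArcsineLaw {Ω : Type*} [MeasurableSpace Ω] (P : Measure Ω) {ι : Type*}
    [Fintype ι] (ζ : Ω → ι → ℝ) (α : ℝ) (β : ι → ℝ) : Prop :=
  ∀ q > (0 : ℝ), ∀ lam : ι → ℝ, (∀ i, 0 ≤ lam i) →
    ∫ u in Ioi (0 : ℝ), Real.exp (-q * u) *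
        (∫ ω, Real.exp (-u * ∑ i, lam i * ζ ω i) ∂P)
      = (∑ i, β i * (q + lam i) ^ (-(1 - α))) / (∑ i, β i * (q + lam i) ^ α)

/-- `S̃_{λ,n,t} = exp(−λ·S_n/t)`. -/
def Stilde {X : Type*} (T : X → X) {ι : Type*} [Fintype ι] (A : ι → Set X)
    (lam : ι → ℝ) (n : ℕ) (t : ℝ) (x : X) : ℝ :=
  Real.exp (-(∑ i, lam i * occVec T A n x i) / t)

/-! ### The interval-map setting -/

/-- The Thaler interval-map setting: `T : [0,1] → [0,1]` with indifferent fixed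
points `xp 1 < ⋯ < xp d`, branch intervals `(a (i-1), a i)`, `C²` branch
extensions `Text i` and `C²` extensions `finv i` of the branch inverses. -/
structure ThalerMap (d : ℕ) (a : ℕ → ℝ) (xp : ℕ → ℝ) (T : ℝ → ℝ)
    (Text : ℕ → ℝ → ℝ) (finv : ℕ → ℝ → ℝ) : Prop where
  d2 : 2 ≤ d
  a0 : a 0 = 0
  ad : a d = 1
  xp1 : xp 1 = 0
  xpd : xp d = 1
  lt_left : ∀ i, 2 ≤ i → i ≤ d → a (i - 1) < xp i
  lt_right : ∀ i, 1 ≤ i → i ≤ d - 1 → xp i < a i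
  mapsTo : Set.MapsTo T (Icc 0 1) (Icc 0 1)
  ext_smooth : ∀ i, 1 ≤ i → i ≤ d → ContDiff ℝ 2 (Text i)
  ext_eq : ∀ i, 1 ≤ i → i ≤ d → EqOn (Text i) T (Ioo (a (i - 1)) (a i))
  dense_image : ∀ i, 1 ≤ i → i ≤ d → Icc (0 : ℝ) 1 ⊆ closure (T '' Ioo (a (i - 1)) (a i))
  fixed : ∀ i, 1 ≤ i → i ≤ d → T (xp i) = xp i ∧ Text i (xp i) = xp i
  deriv_one : ∀ i, 1 ≤ i → i ≤ d → deriv (Text i) (xp i) = 1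
  second_deriv_pos : ∀ i, 1 ≤ i → i ≤ d → ∀ x ∈ Ioo (a (i - 1)) (a i), x ≠ xp i →
    0 < (x - xp i) * iteratedDeriv 2 (Text i) x
  inv_smooth : ∀ i, 1 ≤ i → i ≤ d → ContDiff ℝ 2 (finv i)
  inv_eq : ∀ i, 1 ≤ i → i ≤ d → ∀ x ∈ Ioo (a (i - 1)) (a i), finv i (T x) = x
  inv_maps : ∀ i, 1 ≤ i → i ≤ d → MapsTo (finv i) (Icc 0 1) (Icc (a (i - 1)) (a i))

/-- The density `h(x) = h₀(x) ∏_i (x - x_i)/(x - f_i(x))` of the invariant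
measure with respect to Lebesgue measure. -/
def thalerDensity (d : ℕ) (xp : ℕ → ℝ) (finv : ℕ → ℝ → ℝ) (h0 : ℝ → ℝ) (x : ℝ) : ℝ :=
  h0 x * ∏ i ∈ Finset.Icc 1 d, ((x - xp i) / (x - finv i x))

/-- The invariant measure `μ = h · Leb|_{[0,1]}`. -/
def thalerMeasure (d : ℕ) (xp : ℕ → ℝ) (finv : ℕ → ℝ → ℝ) (h0 : ℝ → ℝ) :
    Measure ℝ :=
  (volume.restrict (Icc 0 1)).withDensity
    (fun x => ENNReal.ofReal (thalerDensity d xp finv h0 x))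

/-- The index set of the rays `(i, ±)`: `+` for `1 ≤ i ≤ d-1`, `−` for `2 ≤ i ≤ d`
(`true` encodes `+`, `false` encodes `−`); it has `2d - 2` elements. -/
def RayIdx (d : ℕ) :=
  {p : Fin (d + 1) × Bool //
    (p.2 = true ∧ 1 ≤ (p.1 : ℕ) ∧ (p.1 : ℕ) ≤ d - 1) ∨
    (p.2 = false ∧ 2 ≤ (p.1 : ℕ) ∧ (p.1 : ℕ) ≤ d)}

instance (d : ℕ) : Fintype (RayIdx d) := by
  unfold RayIdx; infer_instance

/-- The index `i` of a ray. -/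
def rayNum {d : ℕ} (k : RayIdx d) : ℕ := (k.1.1 : ℕ)

/-- The ray `A_i^± = (x_i, x_i + ε)` resp. `(x_i − ε, x_i)`. -/
def raySet {d : ℕ} (xp : ℕ → ℝ) (ε : ℝ) (k : RayIdx d) : Set ℝ :=
  if k.1.2 then Ioo (xp (rayNum k)) (xp (rayNum k) + ε)
  else Ioo (xp (rayNum k) - ε) (xp (rayNum k))

/-- `v_i = ∑_{j ≠ i} h(f_j(x_i)) f_j'(x_i)`. -/
def rayV (d : ℕ) (xp : ℕ → ℝ) (finv : ℕ → ℝ → ℝ) (h0 : ℝ → ℝ) (i : ℕ) : ℝ :=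
  ∑ j ∈ (Finset.Icc 1 d).erase i,
    thalerDensity d xp finv h0 (finv j (xp i)) * deriv (finv j) (xp i)

/-- `β_i^± = (c_i^±)^{−α} v_i / ∑_{j,±} (c_j^±)^{−α} v_j`, with `∞^{−α} = 0`. -/
def rayBeta (d : ℕ) (xp : ℕ → ℝ) (finv : ℕ → ℝ → ℝ) (h0 : ℝ → ℝ) (α : ℝ)
    (c : RayIdx d → ℝ≥0∞) (k : RayIdx d) : ℝ :=
  ((c k ^ (-α)).toReal * rayV d xp finv h0 (rayNum k)) /
    ∑ j, ((c j ^ (-α)).toReal * rayV d xp finv h0 (rayNum j))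

/-- The asymptotic relation `|Tx − x| / Ψ(|x − x_i|) → c_i^±` as `x → x_i ± 0`
(the limit being `+∞` when `c_i^± = ∞`). -/
def RegTLimit {d : ℕ} (T : ℝ → ℝ) (xp : ℕ → ℝ) (Ψ : ℝ → ℝ) (k : RayIdx d)
    (cv : ℝ≥0∞) : Prop :=
  Tendsto (fun x => ENNReal.ofReal (|T x - x| / Ψ |x - xp (rayNum k)|))
    (if k.1.2 then 𝓝[>] (xp (rayNum k)) else 𝓝[<] (xp (rayNum k))) (𝓝 cv)


/-!
Weighting by `e^{-qu}` for a `q` in the interval turns `f_n(u) du` into finite measures `ν_n` on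
`[0, ∞)` whose Laplace transforms converge on some `[0, R)`; at `s = 0` this is convergence of the
total masses, so it suffices to approximate test functions uniformly on `[0, ∞)`. Finite
differences in the Laplace variable give convergence of the moments `∫ u^k e^{-su} dν_n` for
`0 < s < R`, and the Taylor series of `e^{-Δu}`, which converges uniformly against `e^{-su}` when
`Δ < s`, extends convergence from `[0, R)` to `[0, 2R)`, hence to `[0, ∞)`. The Weierstrass theorem
in the variable `e^{-u}` then gives `∫ φ dν_n → ∫ φ dν` for continuous compactly supported `φ`.
Finally, for a tent function `χ` supported just to the right (left) of `u₀`, monotonicity gives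
`∫ χ f_n ≤ f_n(u₀) ∫ χ` (resp. `≥`), which squeezes `f_n(u₀)` at a continuity point of `f_∞`.
-/

open Real

theorem abs_exp_neg_sub_sum_le {x : ℝ} (hx : 0 ≤ x) (n : ℕ) :
    |rexp (-x) - ∑ j ∈ Finset.range n, (-x) ^ j / j.factorial| ≤ x ^ n / n.factorial := by
  rcases hx.eq_or_lt with rfl | hx
  · cases n <;> simp [Finset.sum_range_succ']
  cases n with
  | zero => simpa [abs_of_pos (exp_pos _)] using exp_le_one_iff.2 (neg_nonpos.2 hx.le)
  | succ m =>
    obtain ⟨y, hy, hrem⟩ := taylor_mean_remainder_lagrange_iteratedDeriv (f := rexp)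
      (x₀ := 0) (x := -x) (n := m) (by linarith) contDiff_exp.contDiffOn
    have hu : UniqueDiffOn ℝ (uIcc (0 : ℝ) (-x)) := uniqueDiffOn_uIcc (by linarith)
    have htaylor : taylorWithinEval rexp m (uIcc 0 (-x)) 0 (-x) =
        ∑ j ∈ Finset.range (m + 1), (-x) ^ j / j.factorial := by
      rw [taylor_within_apply]
      refine Finset.sum_congr rfl fun j _ => ?_
      rw [iteratedDerivWithin_eq_iteratedDeriv hu contDiff_exp.contDiffAt left_mem_uIcc,
        iteratedDeriv_eq_iterate, iter_deriv_exp]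
      simp [div_eq_inv_mul]
    rw [iteratedDeriv_eq_iterate, iter_deriv_exp, htaylor] at hrem
    have hy0 : y < 0 := by
      rw [uIoo_of_ge (by linarith)] at hy
      exact hy.2
    rw [hrem, abs_div, abs_mul, abs_of_pos (exp_pos y), sub_zero, abs_pow, abs_neg,
      abs_of_pos hx, Nat.abs_cast]
    gcongr
    exact mul_le_of_le_one_left (by positivity) (exp_le_one_iff.2 hy0.le)

theorem pow_mul_exp_neg_mul_le {s u : ℝ} (hs : 0 < s) (hu : 0 ≤ u) (k : ℕ) :
    u ^ k * rexp (-s * u) ≤ k.factorial / s ^ k := by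
  have h := Real.pow_div_factorial_le_exp (s * u) (mul_nonneg hs.le hu) k
  rw [div_le_iff₀ (by positivity)] at h
  rw [le_div_iff₀ (by positivity)]
  calc u ^ k * rexp (-s * u) * s ^ k = (s * u) ^ k * rexp (-s * u) := by ring
    _ ≤ rexp (s * u) * k.factorial * rexp (-s * u) := by gcongr
    _ = k.factorial := by rw [mul_right_comm, ← exp_add]; simp

theorem abs_pow_sub_one_sub_exp_div_pow_le {h u : ℝ} (hh : 0 < h) (hu : 0 ≤ u) (k : ℕ) :
    |u ^ k - ((1 - rexp (-h * u)) / h) ^ k| ≤ k * h * u ^ (k + 1) := by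
  have hhu : 0 ≤ h * u := mul_nonneg hh.le hu
  have h1 : |rexp (-h * u) - 1| ≤ h * u := by
    simpa [neg_mul] using abs_exp_neg_sub_sum_le hhu 1
  have h2 : |rexp (-h * u) - (1 - h * u)| ≤ (h * u) ^ 2 / 2 := by
    simpa [Finset.sum_range_succ, neg_mul, ← sub_eq_add_neg] using abs_exp_neg_sub_sum_le hhu 2
  have ha : |(1 - rexp (-h * u)) / h| ≤ u := by
    rw [abs_div, abs_of_pos hh, div_le_iff₀ hh, abs_sub_comm]
    linarith
  have hua : |u - (1 - rexp (-h * u)) / h| ≤ h * u ^ 2 := by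
    have : u - (1 - rexp (-h * u)) / h = (rexp (-h * u) - (1 - h * u)) / h := by
      field_simp
      ring
    rw [this, abs_div, abs_of_pos hh, div_le_iff₀ hh]
    nlinarith [sq_nonneg (h * u)]
  set a := (1 - rexp (-h * u)) / h
  rcases k with _ | k
  · simp
  calc |u ^ (k + 1) - a ^ (k + 1)| ≤ |u - a| * (k + 1 : ℕ) * max |u| |a| ^ k :=
        abs_pow_sub_pow_le ..
    _ ≤ h * u ^ 2 * (k + 1 : ℕ) * u ^ k := by
        gcongr
        exact max_le (abs_of_nonneg hu).le ha
    _ = (k + 1 : ℕ) * h * u ^ (k + 1 + 1) := by ring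

section FiniteMeasure

variable {μ : Measure ℝ} [IsFiniteMeasure μ]

theorem integrable_of_abs_le_on_nonneg (hμ : ∀ᵐ u ∂μ, 0 ≤ u) {φ : ℝ → ℝ} (hφ : Continuous φ)
    {C : ℝ} (hC : ∀ u, 0 ≤ u → |φ u| ≤ C) : Integrable φ μ :=
  .of_bound hφ.aestronglyMeasurable C (hμ.mono fun u hu => hC u hu)

theorem integrable_exp_neg_mul (hμ : ∀ᵐ u ∂μ, 0 ≤ u) {t : ℝ} (ht : 0 ≤ t) :
    Integrable (fun u => rexp (-t * u)) μ :=
  integrable_of_abs_le_on_nonneg hμ (by fun_prop) (C := 1) fun u hu => by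
    rw [abs_of_pos (exp_pos _), exp_le_one_iff]
    nlinarith

theorem integrable_pow_mul_exp_neg_mul (hμ : ∀ᵐ u ∂μ, 0 ≤ u) (k : ℕ) {t : ℝ} (ht : 0 < t) :
    Integrable (fun u => u ^ k * rexp (-t * u)) μ :=
  integrable_of_abs_le_on_nonneg hμ (by fun_prop) fun u hu => by
    rw [abs_of_nonneg (by positivity)]
    exact pow_mul_exp_neg_mul_le ht hu k

theorem abs_integral_sub_integral_le (hμ : ∀ᵐ u ∂μ, 0 ≤ u) {φ ψ : ℝ → ℝ} (hφ : Continuous φ)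
    (hψ : Continuous ψ) {C ε : ℝ} (hC : ∀ u, 0 ≤ u → |φ u| ≤ C)
    (hε : ∀ u, 0 ≤ u → |φ u - ψ u| ≤ ε) :
    |∫ u, φ u ∂μ - ∫ u, ψ u ∂μ| ≤ ε * μ.real univ := by
  have hψC : ∀ u, 0 ≤ u → |ψ u| ≤ C + ε := fun u hu => by
    linarith [abs_sub_abs_le_abs_sub (ψ u) (φ u), abs_sub_comm (ψ u) (φ u), hC u hu, hε u hu]
  rw [← integral_sub (integrable_of_abs_le_on_nonneg hμ hφ hC)
    (integrable_of_abs_le_on_nonneg hμ hψ hψC)]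
  exact norm_integral_le_of_norm_le_const (f := fun u => φ u - ψ u) (hμ.mono hε)

end FiniteMeasure

section Sequences

variable {ν : ℕ → Measure ℝ} {νlim : Measure ℝ}

theorem tendsto_integral_finsetSum {ι : Type*} (t : Finset ι) (c : ι → ℝ) {φ : ι → ℝ → ℝ}
    (hint : ∀ i ∈ t, ∀ n, Integrable (φ i) (ν n)) (hintlim : ∀ i ∈ t, Integrable (φ i) νlim)
    (h : ∀ i ∈ t, Tendsto (fun n => ∫ u, φ i u ∂ν n) atTop (𝓝 (∫ u, φ i u ∂νlim))) :
    Tendsto (fun n => ∫ u, ∑ i ∈ t, c i * φ i u ∂ν n) atTop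
      (𝓝 (∫ u, ∑ i ∈ t, c i * φ i u ∂νlim)) := by
  rw [integral_finsetSum t fun i hi => (hintlim i hi).const_mul (c i)]
  simp_rw [integral_finsetSum t fun i hi => (hint i hi _).const_mul (c i), integral_const_mul]
  exact tendsto_finsetSum t fun i hi => (h i hi).const_mul (c i)

theorem tendsto_integral_of_forall_approx [∀ n, IsFiniteMeasure (ν n)] [IsFiniteMeasure νlim]
    (hν : ∀ n, ∀ᵐ u ∂ν n, 0 ≤ u) (hνlim : ∀ᵐ u ∂νlim, 0 ≤ u)
    (hmass : Tendsto (fun n => (ν n).real univ) atTop (𝓝 (νlim.real univ)))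
    {φ : ℝ → ℝ} (hφ : Continuous φ) {C : ℝ} (hC : ∀ u, 0 ≤ u → |φ u| ≤ C)
    (happrox : ∀ ε > 0, ∃ ψ : ℝ → ℝ, Continuous ψ ∧ (∀ u, 0 ≤ u → |φ u - ψ u| ≤ ε) ∧
      Tendsto (fun n => ∫ u, ψ u ∂ν n) atTop (𝓝 (∫ u, ψ u ∂νlim))) :
    Tendsto (fun n => ∫ u, φ u ∂ν n) atTop (𝓝 (∫ u, φ u ∂νlim)) := by
  rw [Metric.tendsto_nhds]
  intro ε hε
  set M := νlim.real univ + 1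
  have hM : 0 < M := by positivity
  obtain ⟨ψ, hψ, hφψ, hψlim⟩ := happrox (ε / (3 * M)) (by positivity)
  have hsmall : ∀ m ≤ M, ε / (3 * M) * m ≤ ε / 3 := fun m hm => by
    calc ε / (3 * M) * m ≤ ε / (3 * M) * M := by gcongr
      _ = ε / 3 := by field_simp
  filter_upwards [hmass.eventually (gt_mem_nhds (lt_add_one _)),
    Metric.tendsto_nhds.1 hψlim (ε / 3) (by positivity)] with n hn hψn
  have h1 := abs_integral_sub_integral_le (hν n) hφ hψ hC hφψ
  have h2 := abs_integral_sub_integral_le hνlim hφ hψ hC hφψ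
  have h3 := hsmall _ hn.le
  have h4 := hsmall _ (lt_add_one _).le
  rw [Real.dist_eq] at hψn ⊢
  rw [abs_sub_comm] at h2
  linarith [abs_sub_le (∫ u, φ u ∂ν n) (∫ u, ψ u ∂ν n) (∫ u, φ u ∂νlim),
    abs_sub_le (∫ u, ψ u ∂ν n) (∫ u, ψ u ∂νlim) (∫ u, φ u ∂νlim)]

theorem tendsto_integral_pow_mul_exp_neg_mul [∀ n, IsFiniteMeasure (ν n)] [IsFiniteMeasure νlim]
    (hν : ∀ n, ∀ᵐ u ∂ν n, 0 ≤ u) (hνlim : ∀ᵐ u ∂νlim, 0 ≤ u) {R : ℝ}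
    (hL : ∀ t ∈ Ico 0 R,
      Tendsto (fun n => ∫ u, rexp (-t * u) ∂ν n) atTop (𝓝 (∫ u, rexp (-t * u) ∂νlim)))
    {s : ℝ} (hs : 0 < s) (hsR : s < R) (k : ℕ) :
    Tendsto (fun n => ∫ u, u ^ k * rexp (-s * u) ∂ν n) atTop
      (𝓝 (∫ u, u ^ k * rexp (-s * u) ∂νlim)) := by
  have hmass : Tendsto (fun n => (ν n).real univ) atTop (𝓝 (νlim.real univ)) := by
    simpa using hL 0 ⟨le_rfl, hs.trans hsR⟩
  refine tendsto_integral_of_forall_approx hν hνlim hmass (by fun_prop)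
    (fun u hu => (abs_of_nonneg (by positivity)).trans_le (pow_mul_exp_neg_mul_le hs hu k))
    fun ε hε => ?_
  set D := k * ((k + 1).factorial / s ^ (k + 1))
  have hR : ∀ᶠ h in 𝓝 (0 : ℝ), s + k * h < R :=
    (Continuous.tendsto' (by fun_prop) 0 s (by simp)).eventually (gt_mem_nhds hsR)
  have hD : ∀ᶠ h in 𝓝 (0 : ℝ), h * D < ε :=
    (Continuous.tendsto' (by fun_prop) 0 0 (by simp)).eventually (gt_mem_nhds hε)
  obtain ⟨h, ⟨hhR, hhD⟩, hh⟩ :=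
    (((hR.and hD).filter_mono nhdsWithin_le_nhds).and (self_mem_nhdsWithin (s := Ioi 0))).exists
  -- the `k`-th forward difference of `t ↦ e^{-tu}` with step `h`, as a finite combination
  have hdiff : (fun u => ((1 - rexp (-h * u)) / h) ^ k * rexp (-s * u)) = fun u =>
      ∑ m ∈ Finset.range (k + 1), (-1) ^ m * k.choose m / h ^ k * rexp (-(s + m * h) * u) := by
    funext u
    rw [div_pow, sub_eq_neg_add, add_pow, Finset.sum_div, Finset.sum_mul]
    refine Finset.sum_congr rfl fun m _ => ?_
    have : rexp (-(s + m * h) * u) = rexp (-h * u) ^ m * rexp (-s * u) := by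
      rw [← exp_nat_mul, ← exp_add]
      ring_nf
    rw [this, neg_pow]
    ring
  refine ⟨fun u => ((1 - rexp (-h * u)) / h) ^ k * rexp (-s * u), by fun_prop,
    fun u hu => ?_, ?_⟩
  · calc |u ^ k * rexp (-s * u) - ((1 - rexp (-h * u)) / h) ^ k * rexp (-s * u)|
        = |u ^ k - ((1 - rexp (-h * u)) / h) ^ k| * rexp (-s * u) := by
          rw [← sub_mul, abs_mul, abs_of_pos (exp_pos _)]
      _ ≤ k * h * u ^ (k + 1) * rexp (-s * u) := by
          gcongr
          exact abs_pow_sub_one_sub_exp_div_pow_le hh hu k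
      _ = h * k * (u ^ (k + 1) * rexp (-s * u)) := by ring
      _ ≤ h * k * ((k + 1).factorial / s ^ (k + 1)) := by
          gcongr
          exact pow_mul_exp_neg_mul_le hs hu _
      _ ≤ ε := by rw [mul_assoc]; exact hhD.le
  · rw [hdiff]
    have hmem : ∀ m ∈ Finset.range (k + 1), s + m * h ∈ Ico 0 R := fun m hm => by
      have : (m : ℝ) ≤ k := by exact_mod_cast Finset.mem_range_succ_iff.1 hm
      constructor <;> nlinarith
    exact tendsto_integral_finsetSum _ _
      (fun m hm n => integrable_exp_neg_mul (hν n) (hmem m hm).1)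
      (fun m hm => integrable_exp_neg_mul hνlim (hmem m hm).1) fun m hm => hL _ (hmem m hm)

theorem tendsto_integral_exp_neg_add_mul_of_lt [∀ n, IsFiniteMeasure (ν n)] [IsFiniteMeasure νlim]
    (hν : ∀ n, ∀ᵐ u ∂ν n, 0 ≤ u) (hνlim : ∀ᵐ u ∂νlim, 0 ≤ u) {R : ℝ}
    (hL : ∀ t ∈ Ico 0 R,
      Tendsto (fun n => ∫ u, rexp (-t * u) ∂ν n) atTop (𝓝 (∫ u, rexp (-t * u) ∂νlim)))
    {s Δ : ℝ} (hs : 0 < s) (hsR : s < R) (hΔ : 0 ≤ Δ) (hΔs : Δ < s) :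
    Tendsto (fun n => ∫ u, rexp (-(s + Δ) * u) ∂ν n) atTop
      (𝓝 (∫ u, rexp (-(s + Δ) * u) ∂νlim)) := by
  have hmass : Tendsto (fun n => (ν n).real univ) atTop (𝓝 (νlim.real univ)) := by
    simpa using hL 0 ⟨le_rfl, hs.trans hsR⟩
  refine tendsto_integral_of_forall_approx hν hνlim hmass (by fun_prop) (C := 1)
    (fun u hu => by rw [abs_of_pos (exp_pos _), exp_le_one_iff]; nlinarith) fun ε hε => ?_
  obtain ⟨N, hN⟩ := exists_pow_lt_of_lt_one hε ((div_lt_one hs).2 hΔs)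
  -- Taylor expansion of `e^{-Δu}` around `Δ = 0`, with the moments at `s` as coefficients
  refine ⟨fun u => ∑ j ∈ Finset.range N, (-Δ) ^ j / j.factorial * (u ^ j * rexp (-s * u)),
    by fun_prop, fun u hu => ?_, tendsto_integral_finsetSum _ _
      (fun j _ n => integrable_pow_mul_exp_neg_mul (hν n) j hs)
      (fun j _ => integrable_pow_mul_exp_neg_mul hνlim j hs)
      fun j _ => tendsto_integral_pow_mul_exp_neg_mul hν hνlim hL hs hsR j⟩
  have hsplit : rexp (-(s + Δ) * u) - ∑ j ∈ Finset.range N,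
      (-Δ) ^ j / j.factorial * (u ^ j * rexp (-s * u)) = rexp (-s * u) *
        (rexp (-(Δ * u)) - ∑ j ∈ Finset.range N, (-(Δ * u)) ^ j / j.factorial) := by
    rw [mul_sub, Finset.mul_sum, ← exp_add]
    congr 1
    · ring_nf
    · refine Finset.sum_congr rfl fun j _ => ?_
      rw [neg_mul_eq_neg_mul, mul_pow]
      ring
  calc _ = rexp (-s * u) *
        |rexp (-(Δ * u)) - ∑ j ∈ Finset.range N, (-(Δ * u)) ^ j / j.factorial| := by
        rw [hsplit, abs_mul, abs_of_pos (exp_pos _)]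
    _ ≤ rexp (-s * u) * ((Δ * u) ^ N / N.factorial) := by
        gcongr
        exact abs_exp_neg_sub_sum_le (by positivity) N
    _ = Δ ^ N / N.factorial * (u ^ N * rexp (-s * u)) := by ring
    _ ≤ Δ ^ N / N.factorial * (N.factorial / s ^ N) := by
        gcongr
        exact pow_mul_exp_neg_mul_le hs hu N
    _ = (Δ / s) ^ N := by rw [div_pow]; field_simp
    _ ≤ ε := hN.le

theorem tendsto_integral_exp_neg_mul_of_tendsto_Ico [∀ n, IsFiniteMeasure (ν n)]
    [IsFiniteMeasure νlim] (hν : ∀ n, ∀ᵐ u ∂ν n, 0 ≤ u) (hνlim : ∀ᵐ u ∂νlim, 0 ≤ u) {R : ℝ}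
    (hR : 0 < R) (hL : ∀ t ∈ Ico 0 R,
      Tendsto (fun n => ∫ u, rexp (-t * u) ∂ν n) atTop (𝓝 (∫ u, rexp (-t * u) ∂νlim)))
    {s : ℝ} (hs : 0 ≤ s) :
    Tendsto (fun n => ∫ u, rexp (-s * u) ∂ν n) atTop (𝓝 (∫ u, rexp (-s * u) ∂νlim)) := by
  suffices ∀ k : ℕ, ∀ t ∈ Ico 0 (2 ^ k * R),
      Tendsto (fun n => ∫ u, rexp (-t * u) ∂ν n) atTop (𝓝 (∫ u, rexp (-t * u) ∂νlim)) by
    obtain ⟨k, hk⟩ := pow_unbounded_of_one_lt (s / R) one_lt_two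
    exact this k s ⟨hs, (div_lt_iff₀ hR).1 hk⟩
  intro k
  induction k with
  | zero => simpa using hL
  | succ k ih =>
    intro t ⟨ht0, ht⟩
    set R' := 2 ^ k * R
    have hR' : 0 < R' := by positivity
    rcases lt_or_ge t R' with htR | htR
    · exact ih t ⟨ht0, htR⟩
    -- one Taylor step from `s₀ ∈ (t/2, R')` reaches `t`
    have ht2 : t < 2 * R' := by rwa [pow_succ, mul_comm _ 2, mul_assoc] at ht
    have := tendsto_integral_exp_neg_add_mul_of_lt hν hνlim ih (s := (t + 2 * R') / 4)
      (Δ := t - (t + 2 * R') / 4) (by positivity) (by linarith) (by linarith) (by linarith)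
    simpa using this

theorem tendsto_integral_comp_exp_neg [∀ n, IsFiniteMeasure (ν n)] [IsFiniteMeasure νlim]
    (hν : ∀ n, ∀ᵐ u ∂ν n, 0 ≤ u) (hνlim : ∀ᵐ u ∂νlim, 0 ≤ u)
    (hL : ∀ s, 0 ≤ s →
      Tendsto (fun n => ∫ u, rexp (-s * u) ∂ν n) atTop (𝓝 (∫ u, rexp (-s * u) ∂νlim)))
    {g : ℝ → ℝ} (hg : Continuous g) :
    Tendsto (fun n => ∫ u, g (rexp (-u)) ∂ν n) atTop (𝓝 (∫ u, g (rexp (-u)) ∂νlim)) := by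
  have hmass : Tendsto (fun n => (ν n).real univ) atTop (𝓝 (νlim.real univ)) := by
    simpa using hL 0 le_rfl
  have hexp : ∀ u, 0 ≤ u → rexp (-u) ∈ Icc 0 1 := fun u hu =>
    ⟨(exp_pos _).le, exp_le_one_iff.2 (by linarith)⟩
  obtain ⟨C, hC⟩ := isCompact_Icc.exists_bound_of_continuousOn hg.continuousOn
  refine tendsto_integral_of_forall_approx hν hνlim hmass (by fun_prop) (C := C)
    (fun u hu => hC _ (hexp u hu)) fun ε hε => ?_
  obtain ⟨p, hp⟩ := exists_polynomial_near_of_continuousOn 0 1 g hg.continuousOn ε hε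
  refine ⟨fun u => p.eval (rexp (-u)), by fun_prop,
    fun u hu => by rw [abs_sub_comm]; exact (hp _ (hexp u hu)).le, ?_⟩
  have hp : (fun u => p.eval (rexp (-u))) = fun u =>
      ∑ i ∈ Finset.range (p.natDegree + 1), p.coeff i * rexp (-(i : ℝ) * u) := by
    funext u
    rw [Polynomial.eval_eq_sum_range]
    refine Finset.sum_congr rfl fun i _ => ?_
    rw [← exp_nat_mul]
    ring_nf
  rw [hp]
  exact tendsto_integral_finsetSum _ _
    (fun i _ n => integrable_exp_neg_mul (hν n) i.cast_nonneg)
    (fun i _ => integrable_exp_neg_mul hνlim i.cast_nonneg) fun i _ => hL i i.cast_nonneg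

theorem tendsto_integral_of_tendsto_integral_exp [∀ n, IsFiniteMeasure (ν n)]
    [IsFiniteMeasure νlim] (hν : ∀ n, ∀ᵐ u ∂ν n, 0 ≤ u) (hνlim : ∀ᵐ u ∂νlim, 0 ≤ u) {R : ℝ}
    (hR : 0 < R) (hL : ∀ t ∈ Ico 0 R,
      Tendsto (fun n => ∫ u, rexp (-t * u) ∂ν n) atTop (𝓝 (∫ u, rexp (-t * u) ∂νlim)))
    {φ : ℝ → ℝ} (hφ : Continuous φ) (hφc : HasCompactSupport φ) :
    Tendsto (fun n => ∫ u, φ u ∂ν n) atTop (𝓝 (∫ u, φ u ∂νlim)) := by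
  obtain ⟨L, hφL⟩ : ∃ L, ∀ u, L ≤ u → φ u = 0 := by
    obtain ⟨L, hL⟩ := hφc.isCompact.bddAbove
    exact ⟨L + 1, fun u hu => image_eq_zero_of_notMem_tsupport fun h => by linarith [hL h]⟩
  -- clamping at `e^{-L}` makes `g` continuous at `t = 0`, where `φ ∘ (-log)` vanishes anyway
  set g : ℝ → ℝ := fun t => φ (-log (max t (rexp (-L))))
  have hg : Continuous g :=
    hφ.comp ((continuous_id.max continuous_const).log fun _ =>
      (lt_max_of_lt_right (exp_pos _)).ne').neg
  have hφg : ∀ u, φ u = g (rexp (-u)) := fun u => by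
    rcases le_or_gt u L with hu | hu
    · simp [g, max_eq_left (exp_le_exp.2 (neg_le_neg hu))]
    · simp [g, max_eq_right (exp_le_exp.2 (neg_le_neg hu.le)), hφL u hu.le, hφL L le_rfl]
  simp_rw [hφg]
  exact tendsto_integral_comp_exp_neg hν hνlim
    (fun s hs => tendsto_integral_exp_neg_mul_of_tendsto_Ico hν hνlim hR hL hs) hg

end Sequences

theorem integral_exp_withDensity_exp (μ : Measure ℝ) (q t : ℝ) :
    ∫ u, rexp (-t * u) ∂μ.withDensity (fun u => ENNReal.ofReal (rexp (-q * u))) =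
      (∫⁻ u, ENNReal.ofReal (rexp (-(q + t) * u)) ∂μ).toReal := by
  rw [integral_eq_lintegral_of_nonneg_ae (ae_of_all _ fun _ => (exp_pos _).le) (by fun_prop),
    lintegral_withDensity_eq_lintegral_mul _ (by fun_prop) (by fun_prop)]
  congr 1
  refine lintegral_congr fun u => ?_
  rw [Pi.mul_apply, ← ENNReal.ofReal_mul (exp_pos _).le, ← exp_add]
  ring_nf

theorem integral_mul_exp_withDensity_exp (μ : Measure ℝ) (q : ℝ) (φ : ℝ → ℝ) :
    ∫ u, φ u * rexp (q * u) ∂μ.withDensity (fun u => ENNReal.ofReal (rexp (-q * u))) =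
      ∫ u, φ u ∂μ := by
  rw [integral_withDensity_eq_integral_toReal_smul (by fun_prop)
    (ae_of_all _ fun _ => ENNReal.ofReal_lt_top)]
  refine integral_congr_ae (ae_of_all _ fun u => ?_)
  dsimp only
  rw [ENNReal.toReal_ofReal (exp_pos _).le, smul_eq_mul, mul_left_comm, ← exp_add]
  simp

theorem lintegral_exp_withDensity_ofReal {μ : Measure ℝ} {g : ℝ → ℝ} (hg : AEMeasurable g μ)
    (q : ℝ) :
    ∫⁻ u, ENNReal.ofReal (rexp (-q * u)) ∂μ.withDensity (fun u => ENNReal.ofReal (g u)) =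
      ∫⁻ u, ENNReal.ofReal (rexp (-q * u) * g u) ∂μ := by
  rw [lintegral_withDensity_eq_lintegral_mul₀ hg.ennreal_ofReal (by fun_prop)]
  refine lintegral_congr fun u => ?_
  rw [Pi.mul_apply, ENNReal.ofReal_mul (exp_pos _).le, mul_comm]

theorem tendsto_integral_of_tendsto_lintegral_exp {ρ : ℕ → Measure ℝ} {ρlim : Measure ℝ}
    (hρ : ∀ n, ∀ᵐ u ∂ρ n, 0 ≤ u) (hρlim : ∀ᵐ u ∂ρlim, 0 ≤ u) {a b : ℝ} (hab : a < b)
    (hfin : ∀ q ∈ Ioo a b, ∫⁻ u, ENNReal.ofReal (rexp (-q * u)) ∂ρlim < ∞)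
    (hconv : ∀ q ∈ Ioo a b, Tendsto (fun n => ∫⁻ u, ENNReal.ofReal (rexp (-q * u)) ∂ρ n) atTop
      (𝓝 (∫⁻ u, ENNReal.ofReal (rexp (-q * u)) ∂ρlim)))
    {φ : ℝ → ℝ} (hφ : Continuous φ) (hφc : HasCompactSupport φ) :
    Tendsto (fun n => ∫ u, φ u ∂ρ n) atTop (𝓝 (∫ u, φ u ∂ρlim)) := by
  set q := (a + b) / 2 with hq_def
  have hq : q ∈ Ioo a b := ⟨by linarith, by linarith⟩
  set w : ℝ → ℝ≥0∞ := fun u => ENNReal.ofReal (rexp (-q * u))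
  obtain ⟨N, hN⟩ := eventually_atTop.1 ((hconv q hq).eventually (gt_mem_nhds (hfin q hq)))
  -- from `N` on, the measures `e^{-qu} ρ_n(du)` are finite
  set ν := fun n => (ρ (n + N)).withDensity w
  have : ∀ n, IsFiniteMeasure (ν n) := fun n =>
    isFiniteMeasure_withDensity (hN _ (Nat.le_add_left _ _)).ne
  have : IsFiniteMeasure (ρlim.withDensity w) := isFiniteMeasure_withDensity (hfin q hq).ne
  have hL : ∀ t ∈ Ico 0 ((b - a) / 2), Tendsto (fun n => ∫ u, rexp (-t * u) ∂ν n) atTop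
      (𝓝 (∫ u, rexp (-t * u) ∂ρlim.withDensity w)) := fun t ht => by
    have hqt : q + t ∈ Ioo a b := ⟨by linarith [ht.1], by linarith [ht.2]⟩
    simp only [ν, w, integral_exp_withDensity_exp]
    exact (ENNReal.tendsto_toReal (hfin _ hqt).ne).comp
      ((hconv _ hqt).comp (tendsto_add_atTop_nat N))
  have := tendsto_integral_of_tendsto_integral_exp
    (fun n => (withDensity_absolutelyContinuous _ _).ae_le (hρ _))
    ((withDensity_absolutelyContinuous _ _).ae_le hρlim) (by linarith) hL
    (φ := fun u => φ u * rexp (q * u)) (by fun_prop) hφc.mul_right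
  simp only [w, integral_mul_exp_withDensity_exp] at this
  exact (tendsto_add_atTop_iff_nat N).1 this

def withDensityIoi (g : ℝ → ℝ) : Measure ℝ :=
  (volume.restrict (Ioi 0)).withDensity fun u => ENNReal.ofReal (g u)

theorem ae_nonneg_withDensityIoi (g : ℝ → ℝ) : ∀ᵐ u ∂withDensityIoi g, 0 ≤ u :=
  (withDensity_absolutelyContinuous _ _).ae_le <|
    (ae_restrict_mem measurableSet_Ioi).mono fun _ hu => le_of_lt hu

theorem integral_withDensityIoi_mem_Icc {g χ : ℝ → ℝ} (hg0 : ∀ u ∈ Ioi 0, 0 ≤ g u)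
    (hg : AntitoneOn g (Ioi 0)) (hχ : Continuous χ) (hχ0 : ∀ u, 0 ≤ χ u) {a b : ℝ} (ha : 0 < a)
    (hχab : ∀ u ∉ Icc a b, χ u = 0) :
    ∫ u, χ u ∂withDensityIoi g ∈ Icc (g b * ∫ u in Ioi 0, χ u) (g a * ∫ u in Ioi 0, χ u) := by
  have hgm : AEMeasurable g (volume.restrict (Ioi 0)) :=
    aemeasurable_restrict_of_antitoneOn measurableSet_Ioi hg
  have hχi : IntegrableOn χ (Ioi 0) :=
    (hχ.integrable_of_hasCompactSupport (HasCompactSupport.intro isCompact_Icc hχab)).integrableOn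
  have hbounds : ∀ u ∈ Ioi (0 : ℝ), g b * χ u ≤ g u * χ u ∧ g u * χ u ≤ g a * χ u := by
    intro u hu
    by_cases hab : u ∈ Icc a b
    · have hb : b ∈ Ioi (0 : ℝ) := ha.trans_le (hab.1.trans hab.2)
      exact ⟨mul_le_mul_of_nonneg_right (hg hu hb hab.2) (hχ0 u),
        mul_le_mul_of_nonneg_right (hg ha hu hab.1) (hχ0 u)⟩
    · simp [hχab u hab]
  have hgχ : IntegrableOn (fun u => g u * χ u) (Ioi 0) :=
    (hχi.const_mul (g a)).mono' (hgm.aestronglyMeasurable.mul hχ.aestronglyMeasurable)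
      ((ae_restrict_mem measurableSet_Ioi).mono fun u hu => by
        rw [Real.norm_eq_abs, abs_of_nonneg (mul_nonneg (hg0 u hu) (hχ0 u))]
        exact (hbounds u hu).2)
  have hdens : ∫ u in Ioi 0, (ENNReal.ofReal (g u)).toReal • χ u = ∫ u in Ioi 0, g u * χ u :=
    setIntegral_congr_fun measurableSet_Ioi fun u hu => by
      rw [ENNReal.toReal_ofReal (hg0 u hu), smul_eq_mul]
  rw [withDensityIoi, integral_withDensity_eq_integral_toReal_smul₀ hgm.ennreal_ofReal
      (ae_of_all _ fun _ => ENNReal.ofReal_lt_top), hdens, ← integral_const_mul,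
    ← integral_const_mul]
  exact ⟨setIntegral_mono_on (hχi.const_mul _) hgχ measurableSet_Ioi fun u hu => (hbounds u hu).1,
    setIntegral_mono_on hgχ (hχi.const_mul _) measurableSet_Ioi fun u hu => (hbounds u hu).2⟩

def tent (a b u : ℝ) : ℝ := max 0 (min (u - a) (b - u))

theorem continuous_tent (a b : ℝ) : Continuous (tent a b) := by
  unfold tent
  fun_prop

theorem tent_nonneg (a b u : ℝ) : 0 ≤ tent a b u := le_max_left _ _

theorem tent_eq_zero {a b u : ℝ} (hu : u ∉ Icc a b) : tent a b u = 0 := by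
  rw [mem_Icc, not_and_or, not_le, not_le] at hu
  refine max_eq_left ?_
  rcases hu with hu | hu
  · exact (min_le_left _ _).trans (by linarith)
  · exact (min_le_right _ _).trans (by linarith)

theorem integral_tent_pos {a b : ℝ} (ha : 0 ≤ a) (hab : a < b) : 0 < ∫ u in Ioi 0, tent a b u := by
  have hsupp : Ioo a b ⊆ Function.support (tent a b) := fun u hu =>
    (lt_max_of_lt_right (lt_min (by linarith [hu.1]) (by linarith [hu.2]))).ne'
  rw [integral_pos_iff_support_of_nonneg (tent_nonneg a b)
    ((continuous_tent a b).integrable_of_hasCompactSupport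
      (HasCompactSupport.intro isCompact_Icc fun _ => tent_eq_zero)).integrableOn]
  calc (0 : ℝ≥0∞) < volume (Ioo a b) := by simpa using hab
    _ = volume.restrict (Ioi 0) (Ioo a b) := by
        rw [Measure.restrict_apply measurableSet_Ioo,
          inter_eq_left.2 (show Ioo a b ⊆ Ioi 0 from fun u hu => ha.trans_lt hu.1)]
    _ ≤ _ := measure_mono hsupp

theorem tendsto_of_tendsto_integral_withDensityIoi {f : ℕ → ℝ → ℝ} {flim : ℝ → ℝ}
    (hf0 : ∀ n, ∀ u ∈ Ioi 0, 0 ≤ f n u) (hf : ∀ n, AntitoneOn (f n) (Ioi 0))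
    (hlim0 : ∀ u ∈ Ioi 0, 0 ≤ flim u) (hlim : AntitoneOn flim (Ioi 0))
    (hvague : ∀ φ : ℝ → ℝ, Continuous φ → HasCompactSupport φ →
      Tendsto (fun n => ∫ u, φ u ∂withDensityIoi (f n)) atTop
        (𝓝 (∫ u, φ u ∂withDensityIoi flim)))
    {u₀ : ℝ} (hu₀ : 0 < u₀) (hcont : ContinuousWithinAt flim (Ioi 0) u₀) :
    Tendsto (fun n => f n u₀) atTop (𝓝 (flim u₀)) := by
  have hca : ContinuousAt flim u₀ := hcont.continuousAt (Ioi_mem_nhds hu₀)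
  have hvague_tent : ∀ a b, Tendsto (fun n => ∫ u, tent a b u ∂withDensityIoi (f n)) atTop
      (𝓝 (∫ u, tent a b u ∂withDensityIoi flim)) := fun a b =>
    hvague _ (continuous_tent a b) (HasCompactSupport.intro isCompact_Icc fun _ => tent_eq_zero)
  have hbounds : ∀ g : ℝ → ℝ, (∀ u ∈ Ioi 0, 0 ≤ g u) → AntitoneOn g (Ioi 0) → ∀ {a b : ℝ},
      0 < a → ∫ u, tent a b u ∂withDensityIoi g ∈
        Icc (g b * ∫ u in Ioi 0, tent a b u) (g a * ∫ u in Ioi 0, tent a b u) :=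
    fun g hg0 hg _ _ ha => integral_withDensityIoi_mem_Icc hg0 hg (continuous_tent _ _)
      (tent_nonneg _ _) ha fun _ => tent_eq_zero
  rw [tendsto_order]
  refine ⟨fun c hc => ?_, fun c hc => ?_⟩
  · obtain ⟨x, hcx, hx⟩ := (((hca.eventually (lt_mem_nhds hc)).filter_mono
      nhdsWithin_le_nhds).and (self_mem_nhdsWithin (s := Ioi u₀))).exists
    have hI := integral_tent_pos hu₀.le hx
    have hlt : c * ∫ u in Ioi 0, tent u₀ x u < ∫ u, tent u₀ x u ∂withDensityIoi flim :=
      (mul_lt_mul_of_pos_right hcx hI).trans_le (hbounds flim hlim0 hlim hu₀).1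
    filter_upwards [(hvague_tent u₀ x).eventually (lt_mem_nhds hlt)] with n hn
    exact lt_of_mul_lt_mul_right (hn.trans_le (hbounds _ (hf0 n) (hf n) hu₀).2) hI.le
  · obtain ⟨x, ⟨hcx, hx0⟩, hx⟩ := ((((hca.eventually (gt_mem_nhds hc)).and
      (Ioi_mem_nhds hu₀)).filter_mono nhdsWithin_le_nhds).and
        (self_mem_nhdsWithin (s := Iio u₀))).exists
    have hI := integral_tent_pos (le_of_lt hx0) hx
    have hlt : ∫ u, tent x u₀ u ∂withDensityIoi flim < c * ∫ u in Ioi 0, tent x u₀ u :=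
      (hbounds flim hlim0 hlim hx0).2.trans_lt (mul_lt_mul_of_pos_right hcx hI)
    filter_upwards [(hvague_tent x u₀).eventually (gt_mem_nhds hlt)] with n hn
    exact lt_of_mul_lt_mul_right ((hbounds _ (hf0 n) (hf n) hx0).1.trans_lt hn) hI.le

theorem stmt7_general
    (f : ℕ → ℝ → ℝ) (flim : ℝ → ℝ)
    (hfnonneg : ∀ n, ∀ u ∈ Ioi (0 : ℝ), 0 ≤ f n u)
    (hfanti : ∀ n, AntitoneOn (f n) (Ioi 0))
    (hlnonneg : ∀ u ∈ Ioi (0 : ℝ), 0 ≤ flim u)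
    (hlanti : AntitoneOn flim (Ioi 0))
    (qa qb : ℝ) (hqab : qa < qb)
    (hfin : ∀ q ∈ Ioo qa qb,
      (∫⁻ u in Ioi (0 : ℝ), ENNReal.ofReal (Real.exp (-q * u) * flim u)) < ⊤)
    (hconv : ∀ q ∈ Ioo qa qb,
      Tendsto (fun n => ∫⁻ u in Ioi (0 : ℝ), ENNReal.ofReal (Real.exp (-q * u) * f n u))
        atTop (𝓝 (∫⁻ u in Ioi (0 : ℝ), ENNReal.ofReal (Real.exp (-q * u) * flim u)))) :
    ∀ u ∈ Ioi (0 : ℝ), ContinuousWithinAt flim (Ioi 0) u →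
      Tendsto (fun n => f n u) atTop (𝓝 (flim u)) := by
  have hlap : ∀ g : ℝ → ℝ, AntitoneOn g (Ioi 0) → ∀ q : ℝ,
      ∫⁻ u, ENNReal.ofReal (rexp (-q * u)) ∂withDensityIoi g =
        ∫⁻ u in Ioi 0, ENNReal.ofReal (rexp (-q * u) * g u) := fun g hg =>
    lintegral_exp_withDensity_ofReal (aemeasurable_restrict_of_antitoneOn measurableSet_Ioi hg)
  intro u hu hcont
  refine tendsto_of_tendsto_integral_withDensityIoi hfnonneg hfanti hlnonneg hlanti
    (fun φ hφ hφc => ?_) hu hcont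
  refine tendsto_integral_of_tendsto_lintegral_exp (fun n => ae_nonneg_withDensityIoi _)
    (ae_nonneg_withDensityIoi _) hqab ?_ ?_ hφ hφc
  · simpa only [hlap flim hlanti] using hfin
  · simpa only [hlap flim hlanti, hlap _ (hfanti _)] using hconv

/-- convergence of Laplace transforms of non-increasing functions
implies pointwise convergence at continuity points of the limit. -/
theorem stmt7
    (f : ℕ → ℝ → ℝ) (flim : ℝ → ℝ)
    (hfnonneg : ∀ n, ∀ u ∈ Ioi (0 : ℝ), 0 ≤ f n u)
    (hfanti : ∀ n, AntitoneOn (f n) (Ioi 0))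
    (hlnonneg : ∀ u ∈ Ioi (0 : ℝ), 0 ≤ flim u)
    (hlanti : AntitoneOn flim (Ioi 0))
    (qa qb : ℝ) (hqa : 0 ≤ qa) (hqab : qa < qb)
    (hfin : ∀ q ∈ Ioo qa qb,
      (∫⁻ u in Ioi (0 : ℝ), ENNReal.ofReal (Real.exp (-q * u) * flim u)) < ⊤)
    (hconv : ∀ q ∈ Ioo qa qb,
      Tendsto (fun n => ∫⁻ u in Ioi (0 : ℝ), ENNReal.ofReal (Real.exp (-q * u) * f n u))
        atTop (𝓝 (∫⁻ u in Ioi (0 : ℝ), ENNReal.ofReal (Real.exp (-q * u) * flim u)))) :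
    ∀ u ∈ Ioi (0 : ℝ), ContinuousWithinAt flim (Ioi 0) u →
      Tendsto (fun n => f n u) atTop (𝓝 (flim u)) :=
  stmt7_general f flim hfnonneg hfanti hlnonneg hlanti qa qb hqab hfin hconv

end
end

section
/- Suppose Assumption (R) holds. Let ζ be a [0,∞)^d-valued random vector and I ⊂ (0,∞) a non-empty open interval. Assume that for every q ∈ I, every λ ∈ [0,∞)^d, and every probability measure ν ≪ μ on (X,𝒜), ∫_0^∞ e^{−qu} (∫_X S̃_{λ,⌊ut⌋,t} dν) du → ∫_0^∞ e^{−qu} E[exp(−u λ·ζ)] du as t → ∞ (t real). Then for every probability measure ν ≪ μ, the pushforwards ν ∘ (S_n/n)^{−1} converge weakly to the law of ζ. -/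
open MeasureTheory Filter Topology Set
open scoped ENNReal

noncomputable section

/-!
The argument runs entirely through Laplace transforms. The substitution `u ↦ r u` trades the
Laplace variable `q` for `q r` and `(λ, t)` for `(r λ, r t)`, so convergence for `q` in an interval
gives convergence for every `q > 0`. For fixed `λ` the functions `u ↦ ∫ S̃_{λ,⌊ut⌋,t} dν` are
antitone with values in `[0,1]`; after `z = e^{-u}` their Laplace transforms at `q = k + 1` are the
moments of the measures `h(-log z) dz` on `[0,1]`, so Weierstrass approximation, together with
bump functions squeezed against monotonicity, yields `∫ exp(-λ·S_n/n) dν → E exp(-λ·ζ)`.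
On the cube `[0,1]^d`, which compactifies `[0,∞)^d` through `c ↦ e^{-c}`, Stone–Weierstrass
upgrades this to convergence against every continuous function of `e^{-S_n/n}`, and clipping the
coordinates at a level `R`, whose error is again a continuous function on the cube, gives weak
convergence of `S_n/n`. Measurability of `ζ` is forced by the hypothesis itself.
-/

open Real ProbabilityTheory
open scoped BoundedContinuousFunction

theorem tendsto_of_forall_mem_submonoid {K : Type*} [TopologicalSpace K] [CompactSpace K]
    {ι : Type*} {L : Filter ι} {Λ : ι → C(K, ℝ) → ℝ} {Λ₀ : C(K, ℝ) → ℝ} {C : ℝ}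
    (hΛ : ∀ i, IsLinearMap ℝ (Λ i)) (hΛ₀ : IsLinearMap ℝ Λ₀)
    (hΛC : ∀ i g, |Λ i g| ≤ C * ‖g‖) (hΛ₀C : ∀ g, |Λ₀ g| ≤ C * ‖g‖)
    (M : Submonoid C(K, ℝ)) (hM : ∀ x y, x ≠ y → ∃ g ∈ M, g x ≠ g y)
    (h : ∀ g ∈ M, Tendsto (fun i => Λ i g) L (𝓝 (Λ₀ g))) (g : C(K, ℝ)) :
    Tendsto (fun i => Λ i g) L (𝓝 (Λ₀ g)) := by
  let S : Submodule ℝ C(K, ℝ) :=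
    { carrier := {g | Tendsto (fun i => Λ i g) L (𝓝 (Λ₀ g))}
      add_mem' := fun {f g} hf hg => by
        simpa only [Set.mem_ofPred_eq, (hΛ _).map_add, hΛ₀.map_add] using hf.add hg
      zero_mem' := by
        simp only [Set.mem_ofPred_eq, (hΛ _).map_zero, hΛ₀.map_zero, tendsto_const_nhds]
      smul_mem' := fun c f hf => by
        simpa only [Set.mem_ofPred_eq, (hΛ _).map_smul, hΛ₀.map_smul, smul_eq_mul]
          using hf.const_mul c }
  have hadjoin : Subalgebra.toSubmodule (Algebra.adjoin ℝ (M : Set C(K, ℝ))) ≤ S := by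
    rw [Algebra.adjoin_eq_span, Submonoid.closure_eq]
    exact Submodule.span_le.2 h
  have hdense : Dense (Algebra.adjoin ℝ (M : Set C(K, ℝ)) : Set C(K, ℝ)) := by
    rw [dense_iff_closure_eq, ← Subalgebra.topologicalClosure_coe,
      ContinuousMap.subalgebra_topologicalClosure_eq_top_of_separatesPoints]
    · rfl
    · intro x y hxy
      obtain ⟨f, hf, hne⟩ := hM x y hxy
      exact ⟨f, ⟨f, Algebra.subset_adjoin hf, rfl⟩, hne⟩
  have hcont : Continuous Λ₀ :=
    AddMonoidHomClass.continuous_of_bound (hΛ₀.mk' Λ₀) C hΛ₀C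
  have hequi : Equicontinuous Λ :=
    Metric.equicontinuous_of_continuity_modulus (fun r => C * r)
      (by simpa using (continuous_const_mul C).tendsto 0) Λ fun f f' i => by
        rw [Real.dist_eq, dist_eq_norm, ← (hΛ i).map_sub]
        exact hΛC i _
  have hclosed : IsClosed (S : Set C(K, ℝ)) := hequi.isClosed_setOfPred_tendsto hcont
  exact hclosed.closure_subset_iff.2 hadjoin (hdense.closure_eq ▸ Set.mem_univ g)

/-- `e^{-u}`, clamped to `1` for `u < 0`. -/
def expNegIcc (u : ℝ) : Icc (0:ℝ) 1 := projIcc 0 1 zero_le_one (exp (-u))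

@[fun_prop]
lemma continuous_expNegIcc : Continuous expNegIcc :=
  continuous_projIcc.comp (continuous_exp.comp continuous_neg)

lemma coe_expNegIcc {u : ℝ} (hu : 0 ≤ u) : (expNegIcc u : ℝ) = exp (-u) :=
  congrArg Subtype.val <|
    projIcc_of_mem _ ⟨(exp_pos _).le, exp_le_one_iff.2 (neg_nonpos.2 hu)⟩

def laplaceTransform (h : ℝ → ℝ) (q : ℝ) : ℝ :=
  ∫ u in Ioi 0, exp (-q * u) * h u

/-- The substitution `z = e^{-u}` turns this into `∫₀¹ V(z) h(-log z) dz`, so that the monomial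
`z^k` is paired with `h` to its Laplace transform at `k + 1`. -/
def expPairing (h : ℝ → ℝ) (V : C(Icc (0:ℝ) 1, ℝ)) : ℝ :=
  ∫ u in Ioi 0, exp (-u) * V (expNegIcc u) * h u

lemma integrableOn_laplaceTransform {h : ℝ → ℝ}
    (hm : AEStronglyMeasurable h (volume.restrict (Ioi 0))) {C q : ℝ}
    (hC : ∀ u ∈ Ioi (0:ℝ), |h u| ≤ C) (hq : 0 < q) :
    IntegrableOn (fun u => exp (-q * u) * h u) (Ioi 0) := by
  refine Integrable.mono' ((exp_neg_integrableOn_Ioi 0 hq).const_mul C)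
    ((continuous_exp.comp (continuous_const_mul _)).aestronglyMeasurable.mul hm) ?_
  filter_upwards [self_mem_ae_restrict measurableSet_Ioi] with u hu
  rw [Real.norm_eq_abs, abs_mul, abs_of_pos (exp_pos _), mul_comm]
  exact mul_le_mul_of_nonneg_right (hC u hu) (exp_pos _).le

lemma laplaceTransform_comp_mul_left (h : ℝ → ℝ) {r : ℝ} (hr : 0 < r) (q : ℝ) :
    laplaceTransform (fun u => h (r * u)) (q * r) = r⁻¹ * laplaceTransform h q := by
  have := integral_comp_mul_left_Ioi (fun u => exp (-q * u) * h u) 0 hr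
  rw [mul_zero, smul_eq_mul] at this
  rw [laplaceTransform, laplaceTransform, ← this]
  congr 1 with u
  ring_nf

lemma laplaceTransform_exp_neg_one : laplaceTransform (fun u => exp (-u)) 1 = 1 / 2 :=
  calc laplaceTransform (fun u => exp (-u)) 1 = ∫ u in Ioi 0, exp (-2 * u) :=
        setIntegral_congr_fun measurableSet_Ioi fun u _ => by rw [← exp_add]; ring_nf
    _ = 1 / 2 := by rw [integral_exp_mul_Ioi (by norm_num) 0]; norm_num

section ExpPairing

variable {h : ℝ → ℝ} {C : ℝ}

lemma abs_expPairing_integrand_le (hC : ∀ u ∈ Ioi (0:ℝ), |h u| ≤ C) (V : C(Icc (0:ℝ) 1, ℝ))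
    {u : ℝ} (hu : u ∈ Ioi 0) : |exp (-u) * V (expNegIcc u) * h u| ≤ C * ‖V‖ * exp (-u) := by
  rw [abs_mul, abs_mul, abs_of_pos (exp_pos _)]
  calc exp (-u) * |V (expNegIcc u)| * |h u| ≤ exp (-u) * ‖V‖ * C := by
        gcongr
        · exact V.norm_coe_le_norm _
        · exact hC u hu
    _ = C * ‖V‖ * exp (-u) := by ring

lemma integrableOn_expPairing (hm : AEStronglyMeasurable h (volume.restrict (Ioi 0)))
    (hC : ∀ u ∈ Ioi (0:ℝ), |h u| ≤ C) (V : C(Icc (0:ℝ) 1, ℝ)) :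
    IntegrableOn (fun u => exp (-u) * V (expNegIcc u) * h u) (Ioi 0) :=
  Integrable.mono' ((integrableOn_exp_neg_Ioi 0).const_mul _)
    ((by fun_prop : Continuous fun u => exp (-u) * V (expNegIcc u)).aestronglyMeasurable.mul hm)
    ((ae_restrict_iff' measurableSet_Ioi).2 (ae_of_all _ fun _ => abs_expPairing_integrand_le hC V))

lemma integrableOn_exp_neg_mul_comp_expNegIcc (V : C(Icc (0:ℝ) 1, ℝ)) :
    IntegrableOn (fun u => exp (-u) * V (expNegIcc u)) (Ioi 0) := by
  simpa using integrableOn_expPairing (h := fun _ => 1) aestronglyMeasurable_const (C := 1)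
    (by simp) V

lemma isLinearMap_expPairing (hm : AEStronglyMeasurable h (volume.restrict (Ioi 0)))
    (hC : ∀ u ∈ Ioi (0:ℝ), |h u| ≤ C) : IsLinearMap ℝ (expPairing h) where
  map_add V W := by
    simp only [expPairing, ContinuousMap.add_apply, mul_add, add_mul]
    exact integral_add (integrableOn_expPairing hm hC V) (integrableOn_expPairing hm hC W)
  map_smul c V := by
    simp only [expPairing, ContinuousMap.smul_apply, smul_eq_mul, ← integral_const_mul]
    congr 1 with u
    ring

lemma abs_expPairing_le (hC : ∀ u ∈ Ioi (0:ℝ), |h u| ≤ C) (V : C(Icc (0:ℝ) 1, ℝ)) :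
    |expPairing h V| ≤ C * ‖V‖ :=
  calc ‖∫ u in Ioi 0, exp (-u) * V (expNegIcc u) * h u‖ ≤ ∫ u in Ioi 0, C * ‖V‖ * exp (-u) :=
        norm_integral_le_of_norm_le ((integrableOn_exp_neg_Ioi 0).const_mul _)
          ((ae_restrict_iff' measurableSet_Ioi).2
            (ae_of_all _ fun _ => abs_expPairing_integrand_le hC V))
    _ = C * ‖V‖ := by rw [integral_const_mul, integral_exp_neg_Ioi_zero, mul_one]

lemma expPairing_pow (k : ℕ) :
    expPairing h (((ContinuousMap.id ℝ).restrict (Icc 0 1)) ^ k) =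
      laplaceTransform h (k + 1) := by
  refine setIntegral_congr_fun measurableSet_Ioi fun u hu => ?_
  rw [ContinuousMap.pow_apply, ContinuousMap.restrict_apply, ContinuousMap.id_apply,
    coe_expNegIcc (le_of_lt hu), ← exp_nat_mul, ← exp_add]
  ring_nf

end ExpPairing

lemma exists_expBump {a b : ℝ} (ha : 0 < a) (hab : a < b) :
    ∃ V : C(Icc (0:ℝ) 1, ℝ), (∀ u, 0 ≤ exp (-u) * V (expNegIcc u)) ∧
      (∀ u ∈ Ioi (0:ℝ), exp (-u) * V (expNegIcc u) ≠ 0 → a < u ∧ u < b) ∧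
      0 < ∫ u in Ioi 0, exp (-u) * V (expNegIcc u) := by
  let V : C(Icc (0:ℝ) 1, ℝ) :=
    ⟨fun z => max 0 (min ((z : ℝ) - exp (-b)) (exp (-a) - z)), by fun_prop⟩
  have hV : ∀ u ∈ Ioi (0:ℝ),
      V (expNegIcc u) = max 0 (min (exp (-u) - exp (-b)) (exp (-a) - exp (-u))) :=
    fun u hu => by simp [V, coe_expNegIcc (le_of_lt hu)]
  have hpos : ∀ u ∈ Ioi (0:ℝ), exp (-u) * V (expNegIcc u) ≠ 0 ↔ a < u ∧ u < b := by
    intro u hu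
    rw [hV u hu, mul_ne_zero_iff, ne_eq, ne_eq, max_eq_left_iff, not_le, lt_min_iff, sub_pos,
      sub_pos, exp_lt_exp, exp_lt_exp, neg_lt_neg_iff, neg_lt_neg_iff]
    exact ⟨fun h => ⟨h.2.2, h.2.1⟩, fun h => ⟨(exp_pos _).ne', h.2, h.1⟩⟩
  refine ⟨V, fun u => mul_nonneg (exp_pos _).le (le_max_left _ _),
    fun u hu => (hpos u hu).1, ?_⟩
  refine (setIntegral_pos_iff_support_of_nonneg_ae
    (Eventually.of_forall fun u => mul_nonneg (exp_pos _).le (le_max_left _ _))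
    (integrableOn_exp_neg_mul_comp_expNegIcc V)).2 ?_
  refine lt_of_lt_of_le ?_ (measure_mono fun u (hu : u ∈ Ioo a b) =>
    ⟨(hpos u (ha.trans hu.1)).2 hu, ha.trans hu.1⟩)
  simpa using hab

lemma setIntegral_mul_le_of_antitoneOn {w h : ℝ → ℝ} {a : ℝ} (ha : 0 < a)
    (hw : ∀ u, 0 ≤ w u) (hwa : ∀ u ∈ Ioi (0:ℝ), w u ≠ 0 → a < u) (hh : AntitoneOn h (Ioi 0))
    (hwi : IntegrableOn w (Ioi 0)) (hwhi : IntegrableOn (fun u => w u * h u) (Ioi 0)) :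
    ∫ u in Ioi 0, w u * h u ≤ (∫ u in Ioi 0, w u) * h a := by
  rw [← integral_mul_const]
  refine setIntegral_mono_on hwhi (hwi.mul_const _) measurableSet_Ioi fun u hu => ?_
  rcases eq_or_ne (w u) 0 with h0 | h0
  · simp [h0]
  · exact mul_le_mul_of_nonneg_left (hh ha hu (hwa u hu h0).le) (hw u)

lemma le_setIntegral_mul_of_antitoneOn {w h : ℝ → ℝ} {b : ℝ} (hb : 0 < b)
    (hw : ∀ u, 0 ≤ w u) (hwb : ∀ u ∈ Ioi (0:ℝ), w u ≠ 0 → u < b) (hh : AntitoneOn h (Ioi 0))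
    (hwi : IntegrableOn w (Ioi 0)) (hwhi : IntegrableOn (fun u => w u * h u) (Ioi 0)) :
    (∫ u in Ioi 0, w u) * h b ≤ ∫ u in Ioi 0, w u * h u := by
  rw [← integral_mul_const]
  refine setIntegral_mono_on (hwi.mul_const _) hwhi measurableSet_Ioi fun u hu => ?_
  rcases eq_or_ne (w u) 0 with h0 | h0
  · simp [h0]
  · exact mul_le_mul_of_nonneg_left (hh hu hb (hwb u hu h0).le) (hw u)

section Tauberian

variable {ι : Type*} {L : Filter ι} {F : ι → ℝ → ℝ} {φ : ℝ → ℝ} {C : ℝ}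

lemma tendsto_expPairing_of_tendsto_laplaceTransform
    (hF : ∀ i, AntitoneOn (F i) (Ioi 0)) (hFC : ∀ i, ∀ u ∈ Ioi (0:ℝ), |F i u| ≤ C)
    (hφ : AntitoneOn φ (Ioi 0)) (hφC : ∀ u ∈ Ioi (0:ℝ), |φ u| ≤ C)
    (h : ∀ q > 0, Tendsto (fun i => laplaceTransform (F i) q) L (𝓝 (laplaceTransform φ q)))
    (V : C(Icc (0:ℝ) 1, ℝ)) : Tendsto (fun i => expPairing (F i) V) L (𝓝 (expPairing φ V)) := by
  refine tendsto_of_forall_mem_submonoid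
    (fun i => isLinearMap_expPairing
      (aemeasurable_restrict_of_antitoneOn measurableSet_Ioi (hF i)).aestronglyMeasurable (hFC i))
    (isLinearMap_expPairing
      (aemeasurable_restrict_of_antitoneOn measurableSet_Ioi hφ).aestronglyMeasurable hφC)
    (fun i => abs_expPairing_le (hFC i)) (abs_expPairing_le hφC)
    (Submonoid.powers ((ContinuousMap.id ℝ).restrict (Icc 0 1)))
    (fun x y hxy => ⟨_, Submonoid.mem_powers _, fun h => hxy (Subtype.ext h)⟩) ?_ V
  rintro _ ⟨k, rfl⟩
  simpa only [expPairing_pow] using h _ (by positivity)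

lemma eventually_lt_apply_of_tendsto_expPairing {u₀ a b : ℝ} (hu₀ : 0 < u₀) (hb : u₀ < b)
    (hab : a < φ b) (hF : ∀ i, AntitoneOn (F i) (Ioi 0))
    (hFC : ∀ i, ∀ u ∈ Ioi (0:ℝ), |F i u| ≤ C) (hφ : AntitoneOn φ (Ioi 0))
    (hφC : ∀ u ∈ Ioi (0:ℝ), |φ u| ≤ C)
    (hJ : ∀ V, Tendsto (fun i => expPairing (F i) V) L (𝓝 (expPairing φ V))) :
    ∀ᶠ i in L, a < F i u₀ := by
  obtain ⟨V, hV0, hVsupp, hc⟩ := exists_expBump hu₀ hb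
  have hupper i : expPairing (F i) V ≤ (∫ u in Ioi 0, exp (-u) * V (expNegIcc u)) * F i u₀ :=
    setIntegral_mul_le_of_antitoneOn hu₀ hV0 (fun u hu h0 => (hVsupp u hu h0).1) (hF i)
      (integrableOn_exp_neg_mul_comp_expNegIcc V) (integrableOn_expPairing
        (aemeasurable_restrict_of_antitoneOn measurableSet_Ioi (hF i)).aestronglyMeasurable
        (hFC i) V)
  have hlower : (∫ u in Ioi 0, exp (-u) * V (expNegIcc u)) * φ b ≤ expPairing φ V :=
    le_setIntegral_mul_of_antitoneOn (hu₀.trans hb) hV0 (fun u hu h0 => (hVsupp u hu h0).2) hφ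
      (integrableOn_exp_neg_mul_comp_expNegIcc V) (integrableOn_expPairing
        (aemeasurable_restrict_of_antitoneOn measurableSet_Ioi hφ).aestronglyMeasurable hφC V)
  filter_upwards [(hJ V).eventually
    (lt_mem_nhds (((mul_lt_mul_iff_right₀ hc).2 hab).trans_le hlower))] with i hi
  exact (mul_lt_mul_iff_right₀ hc).1 (hi.trans_le (hupper i))

lemma eventually_apply_lt_of_tendsto_expPairing {u₀ a b : ℝ} (hb : b ∈ Ioo 0 u₀)
    (hab : φ b < a) (hF : ∀ i, AntitoneOn (F i) (Ioi 0))
    (hFC : ∀ i, ∀ u ∈ Ioi (0:ℝ), |F i u| ≤ C) (hφ : AntitoneOn φ (Ioi 0))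
    (hφC : ∀ u ∈ Ioi (0:ℝ), |φ u| ≤ C)
    (hJ : ∀ V, Tendsto (fun i => expPairing (F i) V) L (𝓝 (expPairing φ V))) :
    ∀ᶠ i in L, F i u₀ < a := by
  obtain ⟨V, hV0, hVsupp, hc⟩ := exists_expBump hb.1 hb.2
  have hlower i : (∫ u in Ioi 0, exp (-u) * V (expNegIcc u)) * F i u₀ ≤ expPairing (F i) V :=
    le_setIntegral_mul_of_antitoneOn (hb.1.trans hb.2) hV0 (fun u hu h0 => (hVsupp u hu h0).2)
      (hF i) (integrableOn_exp_neg_mul_comp_expNegIcc V) (integrableOn_expPairing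
        (aemeasurable_restrict_of_antitoneOn measurableSet_Ioi (hF i)).aestronglyMeasurable
        (hFC i) V)
  have hupper : expPairing φ V ≤ (∫ u in Ioi 0, exp (-u) * V (expNegIcc u)) * φ b :=
    setIntegral_mul_le_of_antitoneOn hb.1 hV0 (fun u hu h0 => (hVsupp u hu h0).1) hφ
      (integrableOn_exp_neg_mul_comp_expNegIcc V) (integrableOn_expPairing
        (aemeasurable_restrict_of_antitoneOn measurableSet_Ioi hφ).aestronglyMeasurable hφC V)
  filter_upwards [(hJ V).eventually
    (gt_mem_nhds (hupper.trans_lt ((mul_lt_mul_iff_right₀ hc).2 hab)))] with i hi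
  exact (mul_lt_mul_iff_right₀ hc).1 ((hlower i).trans_lt hi)

theorem tendsto_apply_of_tendsto_laplaceTransform {u₀ : ℝ}
    (hF : ∀ i, AntitoneOn (F i) (Ioi 0)) (hFC : ∀ i, ∀ u ∈ Ioi (0:ℝ), |F i u| ≤ C)
    (hφ : AntitoneOn φ (Ioi 0)) (hφC : ∀ u ∈ Ioi (0:ℝ), |φ u| ≤ C)
    (hu₀ : 0 < u₀) (hφu₀ : ContinuousAt φ u₀)
    (h : ∀ q > 0, Tendsto (fun i => laplaceTransform (F i) q) L (𝓝 (laplaceTransform φ q))) :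
    Tendsto (fun i => F i u₀) L (𝓝 (φ u₀)) := by
  have hJ := tendsto_expPairing_of_tendsto_laplaceTransform hF hFC hφ hφC h
  refine tendsto_order.2 ⟨fun a ha => ?_, fun a ha => ?_⟩
  · obtain ⟨b, hab, hb⟩ : ∃ b, a < φ b ∧ u₀ < b :=
      (((hφu₀.eventually (lt_mem_nhds ha)).filter_mono nhdsWithin_le_nhds).and
        self_mem_nhdsWithin : ∀ᶠ b in 𝓝[>] u₀, _).exists
    exact eventually_lt_apply_of_tendsto_expPairing hu₀ hb hab hF hFC hφ hφC hJ
  · obtain ⟨b, hab, hb⟩ : ∃ b, φ b < a ∧ b ∈ Ioo 0 u₀ :=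
      (((hφu₀.eventually (gt_mem_nhds ha)).filter_mono nhdsWithin_le_nhds).and
        (Ioo_mem_nhdsLT hu₀) : ∀ᶠ b in 𝓝[<] u₀, _).exists
    exact eventually_apply_lt_of_tendsto_expPairing hb hab hF hFC hφ hφC hJ

end Tauberian

section Cube

variable {d : ℕ}

def expNegCube (c : Fin d → ℝ) : Fin d → Icc (0:ℝ) 1 := fun i => expNegIcc (c i)

lemma continuous_expNegCube : Continuous (expNegCube (d := d)) :=
  continuous_pi fun i => continuous_expNegIcc.comp (continuous_apply i)

def cubeMonomial (k : Fin d → ℕ) : C(Fin d → Icc (0:ℝ) 1, ℝ) :=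
  ⟨fun z => ∏ i, (z i : ℝ) ^ k i, by fun_prop⟩

def cubeMonomials (d : ℕ) : Submonoid C(Fin d → Icc (0:ℝ) 1, ℝ) where
  carrier := range cubeMonomial
  mul_mem' := by
    rintro _ _ ⟨k, rfl⟩ ⟨l, rfl⟩
    exact ⟨k + l, by ext z; simp [cubeMonomial, pow_add, Finset.prod_mul_distrib]⟩
  one_mem' := ⟨0, by ext z; simp [cubeMonomial]⟩

lemma cubeMonomial_expNegCube (k : Fin d → ℕ) {c : Fin d → ℝ} (hc : 0 ≤ c) :
    cubeMonomial k (expNegCube c) = exp (-∑ i, (k i : ℝ) * c i) := by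
  simp only [cubeMonomial, expNegCube, ContinuousMap.coe_mk, coe_expNegIcc (hc _), ← exp_nat_mul,
    ← exp_sum, Finset.sum_neg_distrib, mul_neg]

lemma cubeMonomials_separatesPoints {z w : Fin d → Icc (0:ℝ) 1} (hzw : z ≠ w) :
    ∃ g ∈ cubeMonomials d, g z ≠ g w := by
  obtain ⟨i, hi⟩ := Function.ne_iff.1 hzw
  refine ⟨cubeMonomial (Pi.single i 1), ⟨_, rfl⟩, ?_⟩
  simpa [cubeMonomial, Pi.single_apply, Subtype.ext_iff] using hi

end Cube

section ContinuousTestFunctions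

variable {α K : Type*} [MeasurableSpace α] [TopologicalSpace K] [CompactSpace K]
  (m : Measure α) [IsProbabilityMeasure m] {Φ : α → K}

lemma abs_integral_comp_le (g : C(K, ℝ)) : |∫ a, g (Φ a) ∂m| ≤ ‖g‖ := by
  simpa using norm_integral_le_of_norm_le_const (μ := m) (ae_of_all _ fun a =>
    g.norm_coe_le_norm (Φ a))

variable [TopologicalSpace α] [OpensMeasurableSpace α]

lemma integrable_comp_of_continuous (hΦ : Continuous Φ) (g : C(K, ℝ)) :
    Integrable (fun a => g (Φ a)) m :=
  (integrable_const ‖g‖).mono' (g.continuous.comp hΦ).aestronglyMeasurable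
    (ae_of_all _ fun _ => g.norm_coe_le_norm _)

lemma isLinearMap_integral_comp (hΦ : Continuous Φ) :
    IsLinearMap ℝ fun g : C(K, ℝ) => ∫ a, g (Φ a) ∂m where
  map_add g g' := integral_add (integrable_comp_of_continuous m hΦ g)
    (integrable_comp_of_continuous m hΦ g')
  map_smul c _ := integral_const_mul c _

end ContinuousTestFunctions

section Truncation

variable {d : ℕ}

/-- Composed with `expNegCube`, this clips every coordinate at `R`. -/
def cubeTruncLog (R : ℝ) : C(Fin d → Icc (0:ℝ) 1, Fin d → ℝ) :=
  ⟨fun z i => -log (max (z i) (exp (-R))), continuous_pi fun i =>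
    ((Continuous.log (by fun_prop)) fun _ => (lt_max_of_lt_right (exp_pos _)).ne').neg⟩

/-- At `z = expNegCube c` this is at least `1` as soon as some `c i` exceeds `R`. -/
def cubeTail (R : ℝ) : C(Fin d → Icc (0:ℝ) 1, ℝ) :=
  ⟨fun z => ∑ i, max 0 (2 - exp R * z i), by fun_prop⟩

lemma cubeTail_apply (R : ℝ) (z : Fin d → Icc (0:ℝ) 1) :
    cubeTail R z = ∑ i, max 0 (2 - exp R * z i) :=
  rfl

lemma cubeTail_nonneg (R : ℝ) (z : Fin d → Icc (0:ℝ) 1) : 0 ≤ cubeTail R z := by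
  rw [cubeTail_apply]
  exact Finset.sum_nonneg fun _ _ => le_max_left _ _

lemma abs_sub_comp_cubeTruncLog_le (f : (Fin d → ℝ) →ᵇ ℝ) (R : ℝ) {c : Fin d → ℝ} (hc : 0 ≤ c) :
    |f c - f (cubeTruncLog R (expNegCube c))| ≤ 2 * ‖f‖ * cubeTail R (expNegCube c) := by
  have htail := cubeTail_nonneg R (expNegCube c)
  by_cases hR : ∀ i, c i ≤ R
  · have hc' : cubeTruncLog R (expNegCube c) = c := funext fun i => by
      simp [cubeTruncLog, expNegCube, coe_expNegIcc (hc i),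
        max_eq_left (exp_le_exp.2 (neg_le_neg (hR i)))]
    rw [hc', sub_self, abs_zero]
    positivity
  · obtain ⟨j, hj⟩ := not_forall.1 hR
    have h1 : 1 ≤ cubeTail R (expNegCube c) := by
      rw [cubeTail_apply]
      refine le_trans ?_ (Finset.single_le_sum (fun i _ => le_max_left 0 _) (Finset.mem_univ j))
      refine le_max_of_le_right ?_
      have : exp R * exp (-c j) < 1 := by
        rw [← exp_add]
        exact exp_lt_one_iff.2 (by linarith [not_le.1 hj])
      simp only [expNegCube, coe_expNegIcc (hc j)]
      linarith
    calc |f c - f (cubeTruncLog R (expNegCube c))| ≤ 2 * ‖f‖ := f.dist_le_two_norm _ _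
      _ ≤ 2 * ‖f‖ * cubeTail R (expNegCube c) := le_mul_of_one_le_right (by positivity) h1

lemma tendsto_integral_cubeTail (μ : Measure (Fin d → ℝ)) [IsProbabilityMeasure μ]
    (hμ : ∀ᵐ c ∂μ, 0 ≤ c) :
    Tendsto (fun R => ∫ c, cubeTail R (expNegCube c) ∂μ) atTop (𝓝 0) := by
  have hbound (R : ℝ) (c : Fin d → ℝ) : ‖cubeTail R (expNegCube c)‖ ≤ ∑ _i : Fin d, (2 : ℝ) := by
    rw [Real.norm_of_nonneg (cubeTail_nonneg R _), cubeTail_apply]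
    refine Finset.sum_le_sum fun i _ => max_le zero_le_two ?_
    have : 0 ≤ exp R * (expNegCube c i : ℝ) := mul_nonneg (exp_pos _).le (expNegCube c i).2.1
    linarith
  simpa using tendsto_integral_filter_of_dominated_convergence (f := fun _ => 0) _
    (Eventually.of_forall fun R =>
      ((cubeTail R).continuous.comp continuous_expNegCube).aestronglyMeasurable)
    (Eventually.of_forall fun R => ae_of_all _ (hbound R)) (integrable_const _)
    (hμ.mono fun c hc => by
      simpa [cubeTail_apply] using tendsto_finsetSum Finset.univ fun i _ =>
        (tendsto_const_nhds (x := (0:ℝ))).congr' <|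
          ((tendsto_exp_atTop.atTop_mul_const (exp_pos (-c i))).eventually_ge_atTop 2).mono
            fun R hR => by simp [expNegCube, coe_expNegIcc (hc i), hR, -sub_nonneg])

end Truncation

section LaplaceConvergence

variable {d : ℕ} {ι : Type*} {L : Filter ι} {m : ι → Measure (Fin d → ℝ)}
  {m₀ : Measure (Fin d → ℝ)} [∀ i, IsProbabilityMeasure (m i)] [IsProbabilityMeasure m₀]

theorem tendsto_integral_comp_expNegCube (hm : ∀ i, ∀ᵐ c ∂m i, 0 ≤ c) (hm₀ : ∀ᵐ c ∂m₀, 0 ≤ c)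
    (h : ∀ k : Fin d → ℕ, Tendsto (fun i => ∫ c, exp (-∑ j, (k j : ℝ) * c j) ∂m i) L
      (𝓝 (∫ c, exp (-∑ j, (k j : ℝ) * c j) ∂m₀)))
    (g : C(Fin d → Icc (0:ℝ) 1, ℝ)) :
    Tendsto (fun i => ∫ c, g (expNegCube c) ∂m i) L (𝓝 (∫ c, g (expNegCube c) ∂m₀)) := by
  refine tendsto_of_forall_mem_submonoid
    (fun i => isLinearMap_integral_comp (m i) continuous_expNegCube)
    (isLinearMap_integral_comp m₀ continuous_expNegCube)
    (fun i g => (abs_integral_comp_le (m i) g).trans_eq (one_mul _).symm)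
    (fun g => (abs_integral_comp_le m₀ g).trans_eq (one_mul _).symm) (cubeMonomials d)
    (fun _ _ => cubeMonomials_separatesPoints) ?_ g
  rintro _ ⟨k, rfl⟩
  have hk (μ : Measure (Fin d → ℝ)) (hμ : ∀ᵐ c ∂μ, 0 ≤ c) :
      ∫ c, cubeMonomial k (expNegCube c) ∂μ = ∫ c, exp (-∑ j, (k j : ℝ) * c j) ∂μ :=
    integral_congr_ae (hμ.mono fun c hc => cubeMonomial_expNegCube k hc)
  simpa only [hk _ (hm _), hk _ hm₀] using h k

lemma abs_integral_sub_integral_comp_cubeTruncLog_le (μ : Measure (Fin d → ℝ))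
    [IsProbabilityMeasure μ] (hμ : ∀ᵐ c ∂μ, 0 ≤ c) (f : (Fin d → ℝ) →ᵇ ℝ) (R : ℝ) :
    |∫ c, f c ∂μ - ∫ c, f (cubeTruncLog R (expNegCube c)) ∂μ| ≤
      2 * ‖f‖ * ∫ c, cubeTail R (expNegCube c) ∂μ := by
  have hint : Integrable (fun c => f (cubeTruncLog R (expNegCube c))) μ :=
    integrable_comp_of_continuous μ continuous_expNegCube (f.toContinuousMap.comp (cubeTruncLog R))
  rw [← integral_sub (f.integrable μ) hint, ← integral_const_mul, ← Real.norm_eq_abs]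
  exact norm_integral_le_of_norm_le
    ((integrable_comp_of_continuous μ continuous_expNegCube (cubeTail R)).const_mul _)
    (hμ.mono fun c hc => abs_sub_comp_cubeTruncLog_le f R hc)

theorem tendsto_integral_of_tendsto_integral_comp_expNegCube (hm : ∀ i, ∀ᵐ c ∂m i, 0 ≤ c)
    (hm₀ : ∀ᵐ c ∂m₀, 0 ≤ c)
    (h : ∀ g : C(Fin d → Icc (0:ℝ) 1, ℝ),
      Tendsto (fun i => ∫ c, g (expNegCube c) ∂m i) L (𝓝 (∫ c, g (expNegCube c) ∂m₀)))
    (f : (Fin d → ℝ) →ᵇ ℝ) : Tendsto (fun i => ∫ c, f c ∂m i) L (𝓝 (∫ c, f c ∂m₀)) := by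
  rw [Metric.tendsto_nhds]
  intro ε hε
  obtain ⟨R, hR⟩ : ∃ R, 4 * ‖f‖ * ∫ c, cubeTail R (expNegCube c) ∂m₀ < ε :=
    (((tendsto_integral_cubeTail m₀ hm₀).const_mul (4 * ‖f‖)).eventually
      (gt_mem_nhds (by simpa using hε))).exists
  let tail (μ : Measure (Fin d → ℝ)) := ∫ c, cubeTail R (expNegCube c) ∂μ
  let trunc (μ : Measure (Fin d → ℝ)) := ∫ c, f (cubeTruncLog R (expNegCube c)) ∂μ
  have htail : Tendsto (fun i => tail (m i)) L (𝓝 (tail m₀)) := h (cubeTail R)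
  have htrunc : Tendsto (fun i => trunc (m i)) L (𝓝 (trunc m₀)) :=
    h (f.toContinuousMap.comp (cubeTruncLog R))
  have hbound := (((htail.const_mul (2 * ‖f‖)).add (htrunc.sub_const (trunc m₀)).abs).add_const
    (2 * ‖f‖ * tail m₀))
  rw [sub_self, abs_zero, add_zero, ← add_mul, ← add_mul, two_add_two_eq_four] at hbound
  filter_upwards [hbound.eventually (gt_mem_nhds hR)] with i hi
  have h₁ := abs_integral_sub_integral_comp_cubeTruncLog_le (m i) (hm i) f R
  have h₂ := abs_integral_sub_integral_comp_cubeTruncLog_le m₀ hm₀ f R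
  have h₃ := abs_sub_le (∫ c, f c ∂m i) (trunc (m i)) (∫ c, f c ∂m₀)
  have h₄ := abs_sub_le (trunc (m i)) (trunc m₀) (∫ c, f c ∂m₀)
  rw [abs_sub_comm] at h₂
  rw [Real.dist_eq]
  linarith

end LaplaceConvergence

theorem weakConvTo_of_tendsto_integral_exp {X Ω : Type*} [MeasurableSpace X] [MeasurableSpace Ω]
    {ν : Measure X} {P : Measure Ω} [IsProbabilityMeasure ν] [IsProbabilityMeasure P] {d : ℕ}
    {V : ℕ → X → Fin d → ℝ} {W : Ω → Fin d → ℝ} (hV : ∀ n, Measurable (V n))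
    (hV0 : ∀ n x, 0 ≤ V n x) (hW : AEMeasurable W P) (hW0 : ∀ᵐ ω ∂P, 0 ≤ W ω)
    (h : ∀ k : Fin d → ℕ, Tendsto (fun n => ∫ x, exp (-∑ j, (k j : ℝ) * V n x j) ∂ν) atTop
      (𝓝 (∫ ω, exp (-∑ j, (k j : ℝ) * W ω j) ∂P))) :
    WeakConvTo ν V P W := by
  have : ∀ n, IsProbabilityMeasure (ν.map (V n)) := fun n =>
    Measure.isProbabilityMeasure_map (hV n).aemeasurable
  have : IsProbabilityMeasure (P.map W) := Measure.isProbabilityMeasure_map hW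
  have hnonneg : MeasurableSet {c : Fin d → ℝ | 0 ≤ c} :=
    (isClosed_le continuous_const continuous_id).measurableSet
  have hm n : ∀ᵐ c ∂ν.map (V n), 0 ≤ c :=
    (ae_map_iff (hV n).aemeasurable hnonneg).2 (ae_of_all _ (hV0 n))
  have hm₀ : ∀ᵐ c ∂P.map W, 0 ≤ c := (ae_map_iff hW hnonneg).2 hW0
  have hexp (k : Fin d → ℕ) : Continuous fun c : Fin d → ℝ => exp (-∑ j, (k j : ℝ) * c j) := by
    fun_prop
  intro f
  have := tendsto_integral_of_tendsto_integral_comp_expNegCube hm hm₀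
    (tendsto_integral_comp_expNegCube hm hm₀ fun k => by
      simpa only [integral_map (hV _).aemeasurable (hexp k).aestronglyMeasurable,
        integral_map hW (hexp k).aestronglyMeasurable] using h k) f
  simpa only [integral_map (hV _).aemeasurable f.continuous.aestronglyMeasurable,
    integral_map hW f.continuous.aestronglyMeasurable] using this

section MgfNonneg

variable {Ω : Type*} [MeasurableSpace Ω] {P : Measure Ω} {Y : Ω → ℝ} {t t' : ℝ}

lemma mgf_eq_zero_of_not_aemeasurable (hY : ¬ AEMeasurable Y P) (ht : t ≠ 0) : mgf Y P t = 0 :=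
  mgf_undef fun hint => hY (aemeasurable_of_aemeasurable_exp_mul ht hint.aemeasurable)

variable [IsProbabilityMeasure P]

lemma integrable_exp_mul_of_nonneg (hY0 : ∀ᵐ ω ∂P, 0 ≤ Y ω) (hY : AEMeasurable Y P)
    (ht : t ≤ 0) : Integrable (fun ω => exp (t * Y ω)) P :=
  (integrable_const 1).mono'
    (measurable_exp.comp_aemeasurable (hY.const_mul t)).aestronglyMeasurable
    (hY0.mono fun ω hω => by
      rw [Real.norm_of_nonneg (exp_pos _).le, exp_le_one_iff]
      exact mul_nonpos_of_nonpos_of_nonneg ht hω)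

lemma mgf_le_one_of_nonneg (hY0 : ∀ᵐ ω ∂P, 0 ≤ Y ω) (ht : t ≤ 0) : mgf Y P t ≤ 1 := by
  calc mgf Y P t ≤ ∫ _, (1 : ℝ) ∂P :=
        integral_mono_of_nonneg (ae_of_all _ fun _ => (exp_pos _).le) (integrable_const 1)
          (hY0.mono fun ω hω => exp_le_one_iff.2 (mul_nonpos_of_nonpos_of_nonneg ht hω))
    _ = 1 := by simp

lemma mgf_mono_of_nonneg (hY0 : ∀ᵐ ω ∂P, 0 ≤ Y ω) (hY : AEMeasurable Y P) (htt' : t ≤ t')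
    (ht' : t' ≤ 0) : mgf Y P t ≤ mgf Y P t' :=
  integral_mono_of_nonneg (ae_of_all _ fun _ => (exp_pos _).le)
    (integrable_exp_mul_of_nonneg hY0 hY ht')
    (hY0.mono fun _ hω => exp_le_exp.2 (mul_le_mul_of_nonneg_right htt' hω))

lemma continuousAt_mgf_of_nonneg (hY0 : ∀ᵐ ω ∂P, 0 ≤ Y ω) (hY : AEMeasurable Y P)
    (ht : t < 0) : ContinuousAt (mgf Y P) t := by
  have hsub : Iio 0 ⊆ interior (integrableExpSet Y P) :=
    isOpen_Iio.subset_interior_iff.2 fun s hs => integrable_exp_mul_of_nonneg hY0 hY (le_of_lt hs)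
  exact continuousOn_mgf.continuousAt (isOpen_interior.mem_nhds (hsub ht))

end MgfNonneg

section OccupationTimes

variable {X : Type*} {T : X → X} {ι : Type*} {A : ι → Set X}

lemma occVec_nonneg (n : ℕ) (x : X) (i : ι) : 0 ≤ occVec T A n x i :=
  Finset.sum_nonneg fun _ _ => Set.indicator_nonneg (fun _ _ => zero_le_one) _

lemma occVec_mono {n m : ℕ} (h : n ≤ m) (x : X) (i : ι) :
    occVec T A n x i ≤ occVec T A m x i :=
  Finset.sum_le_sum_of_subset_of_nonneg (Finset.range_subset_range.2 h)
    fun _ _ _ => Set.indicator_nonneg (fun _ _ => zero_le_one) _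

lemma occVec_le (n : ℕ) (x : X) (i : ι) : occVec T A n x i ≤ n := by
  calc occVec T A n x i ≤ ∑ _k ∈ Finset.range n, (1 : ℝ) :=
        Finset.sum_le_sum fun _ _ => Set.indicator_apply_le' (fun _ => le_rfl) fun _ => zero_le_one
    _ = n := by simp

lemma measurable_occVec [MeasurableSpace X] (hT : Measurable T) (hA : ∀ i, MeasurableSet (A i))
    (n : ℕ) : Measurable (occVec T A n) :=
  measurable_pi_lambda _ fun i => Finset.measurable_sum _ fun k _ =>
    (measurable_const.indicator (hA i)).comp (hT.iterate (k + 1))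

variable [Fintype ι] {lam : ι → ℝ} {n : ℕ} {t : ℝ}

lemma Stilde_pos (x : X) : 0 < Stilde T A lam n t x :=
  exp_pos _

lemma Stilde_le_one (hlam : ∀ i, 0 ≤ lam i) (ht : 0 ≤ t) (x : X) :
    Stilde T A lam n t x ≤ 1 := by
  rw [Stilde, exp_le_one_iff, neg_div, neg_nonpos]
  exact div_nonneg (Finset.sum_nonneg fun i _ => mul_nonneg (hlam i) (occVec_nonneg n x i)) ht

lemma Stilde_anti (hlam : ∀ i, 0 ≤ lam i) (ht : 0 ≤ t) {m : ℕ} (hnm : n ≤ m) (x : X) :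
    Stilde T A lam m t x ≤ Stilde T A lam n t x := by
  rw [Stilde, Stilde, exp_le_exp, neg_div, neg_div, neg_le_neg_iff]
  gcongr with i
  · exact hlam i
  · exact occVec_mono hnm x i

lemma measurable_Stilde [MeasurableSpace X] (hT : Measurable T) (hA : ∀ i, MeasurableSet (A i)) :
    Measurable (Stilde T A lam n t) :=
  measurable_exp.comp ((Finset.measurable_sum _ fun i _ =>
    ((measurable_pi_apply i).comp (measurable_occVec hT hA n)).const_mul (lam i)).neg.div_const t)

lemma Stilde_smul {r : ℝ} (hr : r ≠ 0) (x : X) :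
    Stilde T A (r • lam) n (r * t) x = Stilde T A lam n t x := by
  simp only [Stilde, Pi.smul_apply, smul_eq_mul, mul_assoc, ← Finset.mul_sum, neg_div,
    mul_div_mul_left _ _ hr]

lemma exp_neg_mul_sum_le_Stilde (hlam : ∀ i, 0 ≤ lam i) {u : ℝ} (hu : 0 ≤ u) (ht : 0 < t)
    (x : X) : exp (-(u * ∑ i, lam i)) ≤ Stilde T A lam ⌊u * t⌋₊ t x := by
  rw [Stilde, exp_le_exp, neg_div, neg_le_neg_iff, div_le_iff₀ ht, Finset.mul_sum, Finset.sum_mul]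
  refine Finset.sum_le_sum fun i _ => ?_
  calc lam i * occVec T A ⌊u * t⌋₊ x i ≤ lam i * (u * t) :=
        mul_le_mul_of_nonneg_left ((occVec_le _ x i).trans (Nat.floor_le (by positivity)))
          (hlam i)
    _ = u * lam i * t := by ring

lemma Stilde_natCast (x : X) :
    Stilde T A lam n n x = exp (-∑ i, lam i * (occVec T A n x i / n)) := by
  simp only [Stilde, neg_div, Finset.sum_div, mul_div_assoc]

end OccupationTimes

def stildeMean {X : Type*} [MeasurableSpace X] (T : X → X) {ι : Type*} [Fintype ι]
    (A : ι → Set X) (ν : Measure X) (lam : ι → ℝ) (t u : ℝ) : ℝ :=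
  ∫ x, Stilde T A lam ⌊u * t⌋₊ t x ∂ν

section StildeMean

variable {X : Type*} [MeasurableSpace X] {T : X → X} {ι : Type*} [Fintype ι] {A : ι → Set X}
  {ν : Measure X} {lam : ι → ℝ} {t : ℝ}

lemma stildeMean_mul {r : ℝ} (hr : 0 < r) (u : ℝ) :
    stildeMean T A ν lam t (r * u) = stildeMean T A ν (r • lam) (r * t) u := by
  simp only [stildeMean, Stilde_smul hr.ne', mul_assoc, mul_left_comm r]

variable [IsProbabilityMeasure ν]

lemma abs_stildeMean_le_one (hlam : ∀ i, 0 ≤ lam i) (ht : 0 ≤ t) (u : ℝ) :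
    |stildeMean T A ν lam t u| ≤ 1 := by
  refine abs_le.2 ⟨?_, ?_⟩
  · have : 0 ≤ stildeMean T A ν lam t u := integral_nonneg fun x => (Stilde_pos x).le
    linarith
  · calc stildeMean T A ν lam t u ≤ ∫ _, (1 : ℝ) ∂ν :=
          integral_mono_of_nonneg (ae_of_all _ fun x => (Stilde_pos x).le) (integrable_const 1)
            (ae_of_all _ fun x => Stilde_le_one hlam ht x)
      _ = 1 := by simp

lemma integrable_Stilde (hT : Measurable T) (hA : ∀ i, MeasurableSet (A i))
    (hlam : ∀ i, 0 ≤ lam i) (ht : 0 ≤ t) (n : ℕ) : Integrable (Stilde T A lam n t) ν :=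
  (integrable_const 1).mono' (measurable_Stilde hT hA).aestronglyMeasurable
    (ae_of_all _ fun x => by
      rw [Real.norm_of_nonneg (Stilde_pos x).le]
      exact Stilde_le_one hlam ht x)

lemma antitone_stildeMean (hT : Measurable T) (hA : ∀ i, MeasurableSet (A i))
    (hlam : ∀ i, 0 ≤ lam i) (ht : 0 ≤ t) : Antitone (stildeMean T A ν lam t) :=
  fun _ _ huu' => integral_mono_of_nonneg (ae_of_all _ fun x => (Stilde_pos x).le)
    (integrable_Stilde hT hA hlam ht _)
    (ae_of_all _ (Stilde_anti hlam ht (Nat.floor_mono (mul_le_mul_of_nonneg_right huu' ht))))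

lemma exp_neg_mul_sum_le_stildeMean (hT : Measurable T) (hA : ∀ i, MeasurableSet (A i))
    (hlam : ∀ i, 0 ≤ lam i) (ht : 0 < t) {u : ℝ} (hu : 0 ≤ u) :
    exp (-(u * ∑ i, lam i)) ≤ stildeMean T A ν lam t u :=
  calc exp (-(u * ∑ i, lam i)) = ∫ _, exp (-(u * ∑ i, lam i)) ∂ν := by simp
    _ ≤ stildeMean T A ν lam t u :=
      integral_mono_of_nonneg (ae_of_all _ fun _ => (exp_pos _).le)
        (integrable_Stilde hT hA hlam ht.le _)
        (ae_of_all _ (exp_neg_mul_sum_le_Stilde hlam hu ht))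

end StildeMean

section LaplaceHypothesis

variable {X : Type*} [MeasurableSpace X] {T : X → X} {ι : Type*} [Fintype ι] {A : ι → Set X}
  {ν : Measure X} {Ω : Type*} [MeasurableSpace Ω] {P : Measure Ω} {ζ : Ω → ι → ℝ}

lemma mgf_sum_smul (lam : ι → ℝ) (r u : ℝ) :
    mgf (fun ω => ∑ i, (r • lam) i * ζ ω i) P (-u) =
      mgf (fun ω => ∑ i, lam i * ζ ω i) P (-(r * u)) := by
  simp only [mgf, Pi.smul_apply, smul_eq_mul, mul_assoc, ← Finset.mul_sum]
  congr 1 with ω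
  ring_nf

theorem tendsto_laplaceTransform_of_mem_Ioo {qa qb : ℝ} (hqa : 0 ≤ qa) (hqab : qa < qb)
    (hconv : ∀ q ∈ Ioo qa qb, ∀ lam : ι → ℝ, (∀ i, 0 ≤ lam i) →
      Tendsto (fun t => laplaceTransform (stildeMean T A ν lam t) q) atTop
        (𝓝 (laplaceTransform (fun u => mgf (fun ω => ∑ i, lam i * ζ ω i) P (-u)) q)))
    {q : ℝ} (hq : 0 < q) {lam : ι → ℝ} (hlam : ∀ i, 0 ≤ lam i) :
    Tendsto (fun t => laplaceTransform (stildeMean T A ν lam t) q) atTop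
      (𝓝 (laplaceTransform (fun u => mgf (fun ω => ∑ i, lam i * ζ ω i) P (-u)) q)) := by
  obtain ⟨q₀, hq₀⟩ := nonempty_Ioo.2 hqab
  set r := q₀ / q
  have hr : 0 < r := div_pos (hqa.trans_lt hq₀.1) hq
  have hqr : q * r = q₀ := mul_div_cancel₀ _ hq.ne'
  have hF (t : ℝ) : laplaceTransform (stildeMean T A ν lam t) q =
      r * laplaceTransform (stildeMean T A ν (r • lam) (r * t)) q₀ := by
    rw [← hqr, ← funext (stildeMean_mul hr), laplaceTransform_comp_mul_left _ hr,
      mul_inv_cancel_left₀ hr.ne']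
  have hφ : laplaceTransform (fun u => mgf (fun ω => ∑ i, lam i * ζ ω i) P (-u)) q =
      r * laplaceTransform (fun u => mgf (fun ω => ∑ i, (r • lam) i * ζ ω i) P (-u)) q₀ := by
    simp only [mgf_sum_smul, ← hqr]
    rw [laplaceTransform_comp_mul_left (fun u => mgf (fun ω => ∑ i, lam i * ζ ω i) P (-u)) hr,
      mul_inv_cancel_left₀ hr.ne']
  simp only [hF, hφ]
  exact ((hconv q₀ hq₀ (r • lam) fun i => mul_nonneg hr.le (hlam i)).comp
    (tendsto_id.const_mul_atTop hr)).const_mul r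

variable [IsProbabilityMeasure ν]

/-- If some coordinate of `ζ` were not a.e.-measurable, the right-hand side would be a Laplace
transform of junk values `0`, while the left-hand side stays above `1/2`. -/
theorem aemeasurable_of_tendsto_laplaceTransform [DecidableEq ι] (hT : Measurable T)
    (hA : ∀ i, MeasurableSet (A i))
    (hlap : ∀ lam : ι → ℝ, (∀ i, 0 ≤ lam i) →
      Tendsto (fun t => laplaceTransform (stildeMean T A ν lam t) 1) atTop
        (𝓝 (laplaceTransform (fun u => mgf (fun ω => ∑ i, lam i * ζ ω i) P (-u)) 1))) :
    AEMeasurable ζ P := by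
  refine aemeasurable_pi_lambda _ fun i => ?_
  by_contra hi
  have hsingle : 0 ≤ (Pi.single i 1 : ι → ℝ) := Pi.single_nonneg.2 zero_le_one
  have hzero : laplaceTransform
      (fun u => mgf (fun ω => ∑ j, (Pi.single i 1 : ι → ℝ) j * ζ ω j) P (-u)) 1 = 0 := by
    simp only [Pi.single_apply, ite_mul, one_mul, zero_mul, Finset.sum_ite_eq',
      Finset.mem_univ, if_true]
    refine (setIntegral_congr_fun measurableSet_Ioi fun u hu => ?_).trans (integral_zero ℝ ℝ)
    simp only [mgf_eq_zero_of_not_aemeasurable hi (neg_ne_zero.2 (ne_of_gt hu)), mul_zero]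
  have hlow : ∀ᶠ t in atTop, 1 / 2 ≤
      laplaceTransform (stildeMean T A ν (Pi.single i 1) t) 1 := by
    filter_upwards [eventually_gt_atTop 0] with t ht
    rw [← laplaceTransform_exp_neg_one]
    refine setIntegral_mono_on
      (integrableOn_laplaceTransform (C := 1)
        (by fun_prop : Continuous fun u : ℝ => exp (-u)).aestronglyMeasurable
        (fun u hu => by rw [abs_of_pos (exp_pos _), exp_le_one_iff, neg_nonpos]; exact le_of_lt hu)
        one_pos)
      (integrableOn_laplaceTransform
        (antitone_stildeMean hT hA hsingle ht.le).measurable.aestronglyMeasurable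
        (fun u _ => abs_stildeMean_le_one hsingle ht.le u) one_pos)
      measurableSet_Ioi fun u hu => mul_le_mul_of_nonneg_left ?_ (exp_pos _).le
    simpa using exp_neg_mul_sum_le_stildeMean hT hA hsingle ht (le_of_lt hu) (ν := ν)
  have := ge_of_tendsto (hlap _ hsingle) hlow
  rw [hzero] at this
  norm_num at this

theorem tendsto_integral_Stilde_natCast [IsProbabilityMeasure P] (hT : Measurable T)
    (hA : ∀ i, MeasurableSet (A i)) (hζ0 : ∀ ω i, 0 ≤ ζ ω i)
    (hζ : AEMeasurable ζ P) {lam : ι → ℝ} (hlam : ∀ i, 0 ≤ lam i)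
    (hlap : ∀ q > 0, Tendsto (fun t => laplaceTransform (stildeMean T A ν lam t) q) atTop
      (𝓝 (laplaceTransform (fun u => mgf (fun ω => ∑ i, lam i * ζ ω i) P (-u)) q))) :
    Tendsto (fun n : ℕ => ∫ x, Stilde T A lam n n x ∂ν) atTop
      (𝓝 (mgf (fun ω => ∑ i, lam i * ζ ω i) P (-1))) := by
  have hY0 : ∀ᵐ ω ∂P, 0 ≤ ∑ i, lam i * ζ ω i :=
    ae_of_all _ fun ω => Finset.sum_nonneg fun i _ => mul_nonneg (hlam i) (hζ0 ω i)
  have hY : AEMeasurable (fun ω => ∑ i, lam i * ζ ω i) P :=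
    (by fun_prop : Measurable fun v : ι → ℝ => ∑ i, lam i * v i).comp_aemeasurable hζ
  have := tendsto_apply_of_tendsto_laplaceTransform (F := fun n : ℕ => stildeMean T A ν lam n)
    (C := 1) (fun n => (antitone_stildeMean hT hA hlam n.cast_nonneg).antitoneOn _)
    (fun n u _ => abs_stildeMean_le_one hlam n.cast_nonneg u)
    (fun u hu u' _ huu' => mgf_mono_of_nonneg hY0 hY (neg_le_neg huu') (neg_nonpos.2 (le_of_lt hu)))
    (fun u hu => by
      rw [abs_of_nonneg mgf_nonneg]
      exact mgf_le_one_of_nonneg hY0 (neg_nonpos.2 (le_of_lt hu)))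
    one_pos ((continuousAt_mgf_of_nonneg hY0 hY (by norm_num)).comp continuous_neg.continuousAt)
    fun q hq => (hlap q hq).comp tendsto_natCast_atTop_atTop
  simpa [stildeMean] using this

end LaplaceHypothesis

/-- convergence of double Laplace transforms implies strong
convergence in distribution. -/
theorem stmt8
    {X : Type*} [MeasurableSpace X] (μ : Measure X) (T : X → X)
    {d : ℕ} (Y : Set X) (A : Fin d → Set X)
    (hR : RaySetting μ T Y A)
    {Ω : Type*} [MeasurableSpace Ω] (P : Measure Ω) [IsProbabilityMeasure P]
    (ζ : Ω → Fin d → ℝ) (hζnonneg : ∀ ω i, 0 ≤ ζ ω i)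
    (qa qb : ℝ) (hqa : 0 ≤ qa) (hqab : qa < qb)
    (hconv : ∀ q ∈ Ioo qa qb, ∀ lam : Fin d → ℝ, (∀ i, 0 ≤ lam i) →
      ∀ ν : Measure X, IsProbabilityMeasure ν → ν ≪ μ →
        Tendsto (fun t : ℝ =>
            ∫ u in Ioi (0 : ℝ), Real.exp (-q * u) *
              (∫ x, Stilde T A lam ⌊u * t⌋₊ t x ∂ν))
          atTop
          (𝓝 (∫ u in Ioi (0 : ℝ), Real.exp (-q * u) *
            (∫ ω, Real.exp (-u * ∑ i, lam i * ζ ω i) ∂P)))) :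
    ∀ ν : Measure X, IsProbabilityMeasure ν → ν ≪ μ →
      WeakConvTo ν (fun n x i => occVec T A n x i / n) P ζ := by
  intro ν hν hνμ
  have hT : Measurable T := hR.ergodic.measurable
  have hlap : ∀ q > 0, ∀ lam : Fin d → ℝ, (∀ i, 0 ≤ lam i) →
      Tendsto (fun t => laplaceTransform (stildeMean T A ν lam t) q) atTop
        (𝓝 (laplaceTransform (fun u => mgf (fun ω => ∑ i, lam i * ζ ω i) P (-u)) q)) :=
    fun q hq lam hlam => tendsto_laplaceTransform_of_mem_Ioo hqa hqab
      (fun q hq lam hlam => hconv q hq lam hlam ν hν hνμ) hq hlam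
  have hζ : AEMeasurable ζ P :=
    aemeasurable_of_tendsto_laplaceTransform hT hR.measA fun lam hlam => hlap 1 one_pos lam hlam
  refine weakConvTo_of_tendsto_integral_exp
    (fun n => (measurable_occVec hT hR.measA n).div_const _)
    (fun n x i => div_nonneg (occVec_nonneg n x i) n.cast_nonneg) hζ (ae_of_all _ hζnonneg)
    fun k => ?_
  simpa [Stilde_natCast, mgf] using tendsto_integral_Stilde_natCast hT hR.measA hζnonneg hζ
    (fun i => (k i).cast_nonneg) (hlap · · _ fun i => (k i).cast_nonneg)

end
end

section
/- Suppose Assumption (R) holds. Then for every n ≥ 1 and every i = 1,…,d, the identity T̂^n 1_{Y_n ∩ A_i} = Σ_{k>n} T̂^k 1_{B_{i,k}} holds μ-a.e.; equivalently, for every nonnegative g ∈ L^∞(μ), ∫_{Y_n ∩ A_i} g(T^n x) dμ(x) = Σ_{k>n} ∫_{B_{i,k}} g(T^k x) dμ(x). -/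
open MeasureTheory Filter Topology Set
open scoped ENNReal

noncomputable section

/-!
Let `D_m F = tabooPreimage T Y F m` be the set of points that avoid `Y` at times `0, …, m - 1`
and are in `F` at time `m`. As `D_{m+1} F = T⁻¹ D_m F \ Y` and `T` preserves `μ`,
`μ (D_m F) = μ (T⁻¹ D_m F ∩ Y) + μ (D_{m+1} F)`, and telescoping gives
`μ F = ∑_{m<M} μ (T⁻¹ D_m F ∩ Y) + μ (D_M F)`. For `F ⊆ Y_n` the remainder lies in `Y_{M+n}`,
whose measure tends to `0`: for `F = Y` the sum is the measure of the points of `Y` that return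
to `Y`, which is `μ Y < ∞` by conservativity.
For `F = Y_n ∩ A_i ∩ T⁻ⁿ G` with `n ≥ 1`, dynamical separation identifies `T⁻¹ D_m F ∩ Y` with
`B_{i,n+1+m} ∩ T^{-(n+1+m)} G`: an excursion outside `Y` that meets `A_i` stays in `A_i`.
This proves `Tⁿ_* (μ|_{Y_n ∩ A_i}) = ∑_k T^k_* (μ|_{B_{i,k}})`, the claim in dual form.
-/

section Taboo

variable {X : Type*} {T : X → X} {Y F : Set X}

def tabooPreimage (T : X → X) (Y F : Set X) (m : ℕ) : Set X :=
  {x | (∀ r < m, T^[r] x ∉ Y) ∧ T^[m] x ∈ F}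

theorem tabooPreimage_zero : tabooPreimage T Y F 0 = F := by
  simp [tabooPreimage]

theorem tabooPreimage_succ (m : ℕ) :
    tabooPreimage T Y F (m + 1) = T ⁻¹' tabooPreimage T Y F m \ Y := by
  ext x
  simp only [tabooPreimage, Set.mem_sdiff, Set.mem_preimage, Set.mem_ofPred_eq,
    Nat.forall_lt_succ_left, Function.iterate_succ_apply, Function.iterate_zero_apply]
  tauto

theorem tabooPreimage_self (m : ℕ) : tabooPreimage T Y Y m = Yray T Y m := by
  ext x
  exact and_comm

theorem tabooPreimage_inter_preimage_iterate (G : Set X) (n m : ℕ) :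
    tabooPreimage T Y (F ∩ T^[n] ⁻¹' G) m = tabooPreimage T Y F m ∩ T^[n + m] ⁻¹' G := by
  ext x
  simp only [tabooPreimage, Set.mem_inter_iff, Set.mem_preimage, Set.mem_ofPred_eq,
    Function.iterate_add_apply]
  tauto

theorem tabooPreimage_subset_Yray {n : ℕ} (hF : F ⊆ Yray T Y n) (m : ℕ) :
    tabooPreimage T Y F m ⊆ Yray T Y (m + n) := by
  rintro x ⟨hbefore, hx⟩
  obtain ⟨hhit, hafter⟩ := hF hx
  refine ⟨by rwa [add_comm, Function.iterate_add_apply], fun r hr => ?_⟩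
  rcases lt_or_ge r m with hrm | hrm
  · exact hbefore r hrm
  · obtain ⟨s, rfl⟩ := Nat.exists_eq_add_of_le hrm
    rw [add_comm, Function.iterate_add_apply]
    exact hafter s (by omega)

theorem pairwise_disjoint_Yray : Pairwise (Function.onFun Disjoint (Yray T Y)) := by
  intro a b hab
  rw [Function.onFun, Set.disjoint_left]
  rintro x ⟨ha, hbefore_a⟩ ⟨hb, hbefore_b⟩
  rcases hab.lt_or_gt with h | h
  · exact hbefore_b a h ha
  · exact hbefore_a b h hb

theorem iUnion_Yray : ⋃ k, Yray T Y k = {x | ∃ k, T^[k] x ∈ Y} := by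
  classical
  ext x
  simp only [Set.mem_iUnion, Set.mem_ofPred_eq]
  constructor
  · rintro ⟨k, hk, -⟩
    exact ⟨k, hk⟩
  · intro h
    exact ⟨Nat.find h, Nat.find_spec h, fun j hj => Nat.find_min h hj⟩

variable [MeasurableSpace X] {μ : Measure X}

theorem measurableSet_tabooPreimage (hT : Measurable T) (hY : MeasurableSet Y)
    (hF : MeasurableSet F) (m : ℕ) : MeasurableSet (tabooPreimage T Y F m) := by
  induction m with
  | zero => rwa [tabooPreimage_zero]
  | succ m ih => rw [tabooPreimage_succ]; exact (hT ih).diff hY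

theorem measurableSet_Yray (hT : Measurable T) (hY : MeasurableSet Y) (m : ℕ) :
    MeasurableSet (Yray T Y m) :=
  tabooPreimage_self (T := T) m ▸ measurableSet_tabooPreimage hT hY hY m

theorem measure_tabooPreimage_eq_add (hT : MeasurePreserving T μ μ) (hY : MeasurableSet Y)
    (hF : MeasurableSet F) (m : ℕ) :
    μ (tabooPreimage T Y F m) =
      μ (T ⁻¹' tabooPreimage T Y F m ∩ Y) + μ (tabooPreimage T Y F (m + 1)) := by
  rw [tabooPreimage_succ, measure_inter_add_sdiff _ hY,
    hT.measure_preimage (measurableSet_tabooPreimage hT.measurable hY hF m).nullMeasurableSet]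

theorem measure_eq_sum_add_measure_tabooPreimage (hT : MeasurePreserving T μ μ)
    (hY : MeasurableSet Y) (hF : MeasurableSet F) (M : ℕ) :
    μ F = ∑ m ∈ Finset.range M, μ (T ⁻¹' tabooPreimage T Y F m ∩ Y) +
      μ (tabooPreimage T Y F M) := by
  induction M with
  | zero => simp [tabooPreimage_zero]
  | succ M ih =>
    rw [ih, measure_tabooPreimage_eq_add hT hY hF M, Finset.sum_range_succ, add_assoc]

theorem measure_eq_tsum_of_tendsto_measure_tabooPreimage (hT : MeasurePreserving T μ μ)
    (hY : MeasurableSet Y) (hF : MeasurableSet F)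
    (hlim : Tendsto (fun M => μ (tabooPreimage T Y F M)) atTop (𝓝 0)) :
    μ F = ∑' m, μ (T ⁻¹' tabooPreimage T Y F m ∩ Y) := by
  have h := (ENNReal.tendsto_nat_tsum fun m => μ (T ⁻¹' tabooPreimage T Y F m ∩ Y)).add hlim
  rw [add_zero] at h
  exact tendsto_nhds_unique tendsto_const_nhds
    (h.congr fun M => (measure_eq_sum_add_measure_tabooPreimage hT hY hF M).symm)

theorem tsum_measure_preimage_Yray_inter (hT : MeasurePreserving T μ μ)
    (hc : Conservative T μ) (hY : MeasurableSet Y) :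
    ∑' m, μ (T ⁻¹' Yray T Y m ∩ Y) = μ Y := by
  rw [← measure_iUnion, ← Set.iUnion_inter, ← Set.preimage_iUnion, iUnion_Yray]
  · refine le_antisymm (measure_mono Set.inter_subset_right) (measure_mono_ae ?_)
    filter_upwards [hc.ae_mem_imp_frequently_image_mem hY.nullMeasurableSet] with x hx hxY
    obtain ⟨k, hk, hk1⟩ := ((hx hxY).and_eventually (eventually_ge_atTop 1)).exists
    refine ⟨⟨k - 1, ?_⟩, hxY⟩
    rwa [← Function.iterate_succ_apply, Nat.succ_eq_add_one, Nat.sub_add_cancel hk1]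
  · exact fun a b hab => (pairwise_disjoint_Yray hab).preimage T |>.mono
      Set.inter_subset_left Set.inter_subset_left
  · exact fun m => (hT.measurable (measurableSet_Yray hT.measurable hY m)).inter hY

theorem tendsto_measure_Yray (hT : MeasurePreserving T μ μ) (hc : Conservative T μ)
    (hY : MeasurableSet Y) (hfin : μ Y ≠ ∞) :
    Tendsto (fun M => μ (Yray T Y M)) atTop (𝓝 0) := by
  have htel M := measure_eq_sum_add_measure_tabooPreimage hT hY hY M
  simp only [tabooPreimage_self] at htel
  have hS := ENNReal.tendsto_nat_tsum fun m => μ (T ⁻¹' Yray T Y m ∩ Y)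
  rw [tsum_measure_preimage_Yray_inter hT hc hY] at hS
  have hlim := ENNReal.Tendsto.sub tendsto_const_nhds hS (Or.inl hfin)
  rw [tsub_self] at hlim
  refine hlim.congr fun M => ?_
  rw [htel M, ENNReal.add_sub_cancel_left (ne_top_of_le_ne_top hfin (htel M ▸ le_self_add))]

theorem measure_eq_tsum_of_subset_Yray (hT : MeasurePreserving T μ μ) (hc : Conservative T μ)
    (hY : MeasurableSet Y) (hfin : μ Y ≠ ∞) (hF : MeasurableSet F) {n : ℕ}
    (hFn : F ⊆ Yray T Y n) :
    μ F = ∑' m, μ (T ⁻¹' tabooPreimage T Y F m ∩ Y) :=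
  measure_eq_tsum_of_tendsto_measure_tabooPreimage hT hY hF <|
    tendsto_of_tendsto_of_tendsto_of_le_of_le tendsto_const_nhds
      ((tendsto_measure_Yray hT hc hY hfin).comp (tendsto_add_atTop_nat n))
      (fun _ => zero_le) fun m => measure_mono (tabooPreimage_subset_Yray hFn m)

end Taboo

namespace RaySetting

variable {X : Type*} [MeasurableSpace X] {μ : Measure X} {T : X → X} {d : ℕ} {Y : Set X}
  {A : Fin d → Set X}

theorem exists_mem_of_notMem (hR : RaySetting μ T Y A) {x : X} (hx : x ∉ Y) :
    ∃ j, x ∈ A j := by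
  have hx' : x ∈ Y ∪ ⋃ j, A j := hR.cover ▸ Set.mem_univ x
  simpa [hx] using hx'

theorem notMem_of_mem (hR : RaySetting μ T Y A) {x : X} {i : Fin d} (hx : x ∈ A i) :
    x ∉ Y :=
  Set.disjoint_right.mp (hR.disjYA i) hx

theorem eq_of_iterate_mem (hR : RaySetting μ T Y A) {x : X} {a b : ℕ} {i j : Fin d}
    (hab : a ≤ b) (ha : T^[a] x ∈ A i) (hb : T^[b] x ∈ A j)
    (hY : ∀ r, a < r → r < b → T^[r] x ∉ Y) : i = j := by
  by_contra hij
  obtain ⟨k, hk0, hk, hkY⟩ := hR.sep (T^[a] x) (b - a) i j hij ha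
    (by rwa [← Function.iterate_add_apply, Nat.sub_add_cancel hab])
  rw [← Function.iterate_add_apply] at hkY
  exact hY (k + a) (by omega) (by omega) hkY

theorem iterate_mem_of_forall_notMem (hR : RaySetting μ T Y A) {x : X} {a k : ℕ} {i : Fin d}
    (ha0 : 0 < a) (hak : a < k) (ha : T^[a] x ∈ A i)
    (hY : ∀ r, 0 < r → r < k → T^[r] x ∉ Y) : ∀ r, 0 < r → r < k → T^[r] x ∈ A i := by
  intro r hr0 hrk
  obtain ⟨j, hj⟩ := hR.exists_mem_of_notMem (hY r hr0 hrk)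
  rcases le_total a r with h | h
  · rwa [hR.eq_of_iterate_mem h ha hj fun s hs hsr => hY s (by omega) (by omega)]
  · rwa [← hR.eq_of_iterate_mem h hj ha fun s hs hsa => hY s (by omega) (by omega)]

theorem preimage_tabooPreimage_inter_eq_Bray (hR : RaySetting μ T Y A) {n : ℕ} (hn : 1 ≤ n)
    (i : Fin d) (m : ℕ) :
    T ⁻¹' tabooPreimage T Y (Yray T Y n ∩ A i) m ∩ Y = Bray T Y (A i) (n + 1 + m) := by
  ext x
  simp only [Bray, tabooPreimage, Yray, Set.mem_inter_iff, Set.mem_preimage, Set.mem_ofPred_eq,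
    ← Function.iterate_succ_apply, ← Function.iterate_add_apply]
  constructor
  · rintro ⟨⟨hbefore, ⟨hret, hafter⟩, hA⟩, hxY⟩
    have hstay : ∀ r, 0 < r → r < n + 1 + m → T^[r] x ∉ Y := by
      intro r hr0 hr
      rcases lt_or_ge r (m + 1) with h | h
      · rw [show r = (r - 1).succ by omega]
        exact hbefore _ (by omega)
      · rw [show r = (r - (m + 1) + m).succ by omega]
        exact hafter _ (by omega)
    refine ⟨hxY, hR.iterate_mem_of_forall_notMem m.succ_pos (by omega) hA hstay, ?_⟩
    rwa [show n + 1 + m = (n + m).succ by omega]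
  · rintro ⟨hxY, hA, hret⟩
    refine ⟨⟨fun r hr => hR.notMem_of_mem (hA _ r.succ_pos (by omega)), ⟨?_, fun j hj =>
      hR.notMem_of_mem (hA _ (Nat.succ_pos _) (by omega))⟩, hA _ m.succ_pos (by omega)⟩, hxY⟩
    rwa [show (n + m).succ = n + 1 + m by omega]

theorem map_restrict_Yray_inter_eq_sum (hR : RaySetting μ T Y A) {n : ℕ} (hn : 1 ≤ n)
    (i : Fin d) :
    (μ.restrict (Yray T Y n ∩ A i)).map T^[n] =
      Measure.sum fun j => (μ.restrict (Bray T Y (A i) (n + 1 + j))).map T^[n + 1 + j] := by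
  have hT := hR.ergodic.toMeasurePreserving
  have hiter (k : ℕ) : Measurable T^[k] := hT.measurable.iterate k
  ext G hG
  simp only [Measure.sum_apply _ hG, Measure.map_apply (hiter _) hG,
    Measure.restrict_apply (hiter _ hG)]
  have hF : MeasurableSet (Yray T Y n ∩ A i ∩ T^[n] ⁻¹' G) :=
    ((measurableSet_Yray hT.measurable hR.measY n).inter (hR.measA i)).inter (hiter n hG)
  rw [Set.inter_comm, measure_eq_tsum_of_subset_Yray hT hR.conservative hR.measY hR.finY.ne hF
    fun x hx => hx.1.1]
  refine tsum_congr fun j => congrArg μ ?_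
  rw [tabooPreimage_inter_preimage_iterate, Set.preimage_inter, Set.inter_right_comm,
    hR.preimage_tabooPreimage_inter_eq_Bray hn, Set.inter_comm, ← Set.preimage_comp,
    ← Function.iterate_succ, Nat.succ_eq_add_one]
  congr 3
  omega

end RaySetting

/-- the identity `T̂ⁿ 1_{Yₙ ∩ Aᵢ} = ∑_{k>n} T̂ᵏ 1_{B_{i,k}}` μ-a.e.,
in its equivalent integral form. -/
theorem stmt9
    {X : Type*} [MeasurableSpace X] (μ : Measure X) (T : X → X)
    {d : ℕ} (Y : Set X) (A : Fin d → Set X)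
    (hR : RaySetting μ T Y A) :
    ∀ n, 1 ≤ n → ∀ i, ∀ g : X → ℝ≥0∞, Measurable g →
      (∃ C : ℝ≥0∞, C < ⊤ ∧ ∀ x, g x ≤ C) →
      ∫⁻ x in Yray T Y n ∩ A i, g (T^[n] x) ∂μ
        = ∑' j : ℕ, ∫⁻ x in Bray T Y (A i) (n + 1 + j), g (T^[n + 1 + j] x) ∂μ := by
  intro n hn i g hg _
  have hiter (k : ℕ) : Measurable T^[k] := hR.ergodic.measurable.iterate k
  rw [← lintegral_map hg (hiter n), hR.map_restrict_Yray_inter_eq_sum hn i,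
    lintegral_sum_measure]
  exact tsum_congr fun j => lintegral_map hg (hiter _)

end
end
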